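/- arXiv:1103.3169 — 11 statements merged into one kernel-verified Lean document; each statement's English description precedes it below -/
import Mathlib

section
/- If G is a randomly k-dimensional graph that is not a complete graph, then for every pair of distinct vertices u, v ∈ V(G) we have N(u) \ {v} ≠ N(v) \ {u}. -/
open SimpleGraph

/-- `W` is a resolving set for `G`: distinct vertices have distinct
metric representations with respect to `W`. -/
def IsResolvingSet {V : Type*} (G : SimpleGraph V) (W : Finset V) : Prop :=
  ∀ u v : V, u ≠ v → ∃ w ∈ W, G.dist u w ≠ G.dist v w

/-- The metric dimension `β(G)`: minimum cardinality of a resolving set. -/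
noncomputable def metricDim {V : Type*} [Fintype V] (G : SimpleGraph V) : ℕ :=
  sInf {k | ∃ W : Finset V, W.card = k ∧ IsResolvingSet G W}

/-- A (metric) basis of `G`: a resolving set of minimum cardinality. -/
def IsMetricBasis {V : Type*} [Fintype V] (G : SimpleGraph V) (B : Finset V) : Prop :=
  IsResolvingSet G B ∧ B.card = metricDim G

/-- The resolving number `res(G)`: the minimum `k` such that every `k`-set of
vertices is a resolving set. -/
noncomputable def resolvingNumber {V : Type*} [Fintype V] (G : SimpleGraph V) : ℕ :=
  sInf {k | ∀ W : Finset V, W.card = k → IsResolvingSet G W}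

/-- The basis number `bas(G)`: the maximum `r` such that every `r`-set of
vertices is contained in some basis. -/
noncomputable def basisNumber {V : Type*} [Fintype V] (G : SimpleGraph V) : ℕ :=
  sSup {r | r ≤ Fintype.card V ∧
    ∀ S : Finset V, S.card = r → ∃ B : Finset V, S ⊆ B ∧ IsMetricBasis G B}

/-- `G` is randomly `k`-dimensional: `β(G) = k` and every `k`-set of vertices
is a basis of `G`. -/
def RandomlyDimensional {V : Type*} [Fintype V] (G : SimpleGraph V) (k : ℕ) : Prop :=
  metricDim G = k ∧ ∀ W : Finset V, W.card = k → IsMetricBasis G W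

/-!
Twins `u, v` (that is, `N(u) \ {v} = N(v) \ {u}`) are at the same distance from every third
vertex, so every resolving set contains `u` or `v`. On the other hand, a connected graph that is
not complete contains an induced path `x - a - b`, and then all vertices but `x` and `a` already
form a resolving set, so `β(G) ≤ |V| - 2`. In a randomly `β(G)`-dimensional graph we may thus
choose a basis avoiding both twins, which is absurd.
-/

namespace SimpleGraph

variable {V : Type*} {G : SimpleGraph V}

lemma Reachable.exists_adj_dist_add_one_eq {u w : V} (h : G.Reachable u w) (hne : u ≠ w) :
    ∃ x, G.Adj u x ∧ G.dist x w + 1 = G.dist u w := by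
  obtain ⟨p, hp⟩ := h.exists_walk_length_eq_dist
  cases p with
  | nil => exact absurd rfl hne
  | @cons _ x _ hadj q =>
    refine ⟨x, hadj, le_antisymm ?_ ?_⟩
    · simpa [← hp] using dist_le q
    · simpa [dist_eq_one_iff_adj.mpr hadj, add_comm] using
        hadj.reachable.dist_triangle_left w

lemma Connected.dist_le_of_neighborSet_sdiff_eq (hG : G.Connected) {u v w : V}
    (htwin : G.neighborSet u \ {v} = G.neighborSet v \ {u}) (hwu : w ≠ u) (hwv : w ≠ v) :
    G.dist u w ≤ G.dist v w := by
  obtain ⟨x, hvx, hx⟩ := (hG v w).exists_adj_dist_add_one_eq hwv.symm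
  by_cases hxu : x = u
  · subst hxu
    omega
  · have hux : G.Adj u x := by
      have : x ∈ G.neighborSet v \ {u} := ⟨hvx, hxu⟩
      exact (htwin ▸ this).1
    have := hux.reachable.dist_triangle_left w
    rw [dist_eq_one_iff_adj.mpr hux] at this
    omega

lemma Connected.dist_eq_of_neighborSet_sdiff_eq (hG : G.Connected) {u v w : V}
    (htwin : G.neighborSet u \ {v} = G.neighborSet v \ {u}) (hwu : w ≠ u) (hwv : w ≠ v) :
    G.dist u w = G.dist v w :=
  (hG.dist_le_of_neighborSet_sdiff_eq htwin hwu hwv).antisymm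
    (hG.dist_le_of_neighborSet_sdiff_eq htwin.symm hwv hwu)

end SimpleGraph

section

variable {V : Type*} {G : SimpleGraph V}

lemma IsResolvingSet.mem_or_mem_of_neighborSet_sdiff_eq {W : Finset V} (hW : IsResolvingSet G W)
    (hG : G.Connected) {u v : V} (huv : u ≠ v)
    (htwin : G.neighborSet u \ {v} = G.neighborSet v \ {u}) : u ∈ W ∨ v ∈ W := by
  by_contra! ⟨hu, hv⟩
  obtain ⟨w, hw, hne⟩ := hW u v huv
  exact hne (hG.dist_eq_of_neighborSet_sdiff_eq htwin (ne_of_mem_of_not_mem hw hu)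
    (ne_of_mem_of_not_mem hw hv))

lemma isResolvingSet_of_forall_notMem (hG : G.Connected) {W : Finset V}
    (h : ∀ u v, u ∉ W → v ∉ W → u ≠ v → ∃ w ∈ W, G.dist u w ≠ G.dist v w) :
    IsResolvingSet G W := by
  intro u v huv
  by_cases hu : u ∈ W
  · exact ⟨u, hu, by simpa using (hG.pos_dist_of_ne huv.symm).ne⟩
  by_cases hv : v ∈ W
  · exact ⟨v, hv, by simpa using (hG.pos_dist_of_ne huv).ne'⟩
  exact h u v hu hv huv

lemma isResolvingSet_univ_sdiff_pair [Fintype V] [DecidableEq V] (hG : G.Connected)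
    {a b w : V} (hwa : w ≠ a) (hwb : w ≠ b) (hd : G.dist a w ≠ G.dist b w) :
    IsResolvingSet G (Finset.univ \ {a, b}) := by
  refine isResolvingSet_of_forall_notMem hG fun u v hu hv huv ↦ ⟨w, by simp [hwa, hwb], ?_⟩
  simp only [Finset.mem_sdiff, Finset.mem_univ, true_and, not_not, Finset.mem_insert,
    Finset.mem_singleton] at hu hv
  rcases hu with rfl | rfl <;> rcases hv with rfl | rfl
  · exact absurd rfl huv
  · exact hd
  · exact hd.symm
  · exact absurd rfl huv

lemma metricDim_le_card_sub_two [Fintype V] (hG : G.Connected) (hne : G ≠ ⊤) :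
    metricDim G ≤ Fintype.card V - 2 := by
  classical
  obtain ⟨u, v, huv, hnadj⟩ := ne_top_iff_exists_not_adj.mp hne
  obtain ⟨p, hp⟩ := hG.exists_walk_length_eq_dist u v
  obtain ⟨x, a, b, hxa, hab, hnxb, hxb⟩ :=
    p.exists_adj_adj_not_adj_ne hp (hG.one_lt_dist_of_ne_of_not_adj huv hnadj)
  have hdist : G.dist x b ≠ G.dist a b := by simpa [dist_eq_one_iff_adj.mpr hab] using hnxb
  have hres : IsResolvingSet G (Finset.univ \ {x, a}) :=
    isResolvingSet_univ_sdiff_pair hG hxb.symm hab.ne' hdist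
  refine Nat.sInf_le ⟨_, ?_, hres⟩
  rw [Finset.card_univ_sdiff, Finset.card_pair hxa.ne]

end

theorem randomlyDimensional_no_twins {V : Type*} [Fintype V] (G : SimpleGraph V)
    (hG : G.Connected) (k : ℕ) (h : RandomlyDimensional G k) (hne : G ≠ ⊤) :
    ∀ u v : V, u ≠ v → G.neighborSet u \ {v} ≠ G.neighborSet v \ {u} := by
  classical
  intro u v huv htwin
  have hk : k ≤ (Finset.univ \ {u, v}).card := by
    rw [Finset.card_univ_sdiff, Finset.card_pair huv, ← h.1]
    exact metricDim_le_card_sub_two hG hne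
  obtain ⟨W, hWsub, hWcard⟩ := Finset.exists_subset_card_eq hk
  have hW : IsResolvingSet G W := (h.2 W hWcard).1
  rcases hW.mem_or_mem_of_neighborSet_sdiff_eq hG huv htwin with hu | hv
  · simpa using hWsub hu
  · simpa using hWsub hv
end

section
/- If G is a randomly k-dimensional graph with k ≥ 2, then the minimum degree of G is at least 2. -/
open SimpleGraph

lemma pendant_dist {V : Type*} (G : SimpleGraph V) (hG : G.Connected) {v u : V}
    (hadj : G.Adj v u) (huniq : ∀ w, G.Adj v w → w = u) {x : V} (hx : x ≠ v) :
    G.dist x v = G.dist x u + 1 := by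
  have h1 : G.dist u v = 1 := by rw [dist_eq_one_iff_adj]; exact hadj.symm
  have hle : G.dist x v ≤ G.dist x u + 1 := by
    calc G.dist x v ≤ G.dist x u + G.dist u v := hG.dist_triangle
    _ = G.dist x u + 1 := by rw [h1]
  have hpos : G.dist v x ≠ 0 := (hG.pos_dist_of_ne (Ne.symm hx)).ne'
  obtain ⟨p, hp⟩ := exists_walk_of_dist_ne_zero hpos
  obtain ⟨w, hadj', q, rfl⟩ := Walk.exists_eq_cons_of_ne (Ne.symm hx) p
  obtain rfl : w = u := huniq w hadj'
  have h2 : G.dist w x ≤ q.length := dist_le q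
  have h3 : G.dist x w + 1 ≤ G.dist x v := by
    have hc1 : G.dist x v = G.dist v x := SimpleGraph.dist_comm
    have hc2 : G.dist x w = G.dist w x := SimpleGraph.dist_comm
    rw [Walk.length_cons] at hp
    omega
  omega

theorem randomlyDimensional_minDegree {V : Type*} [Fintype V] (G : SimpleGraph V)
    [DecidableRel G.Adj] (hG : G.Connected) (k : ℕ) (hk : 2 ≤ k)
    (h : RandomlyDimensional G k) : 2 ≤ G.minDegree := by
  classical
  obtain ⟨hdim, hbasis⟩ := h
  have huniv : IsResolvingSet G Finset.univ := by
    intro a b hab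
    refine ⟨a, Finset.mem_univ a, ?_⟩
    rw [SimpleGraph.dist_self]
    intro e
    exact hab ((hG.dist_eq_zero_iff).mp e.symm).symm
  have hklecard : k ≤ Fintype.card V := by
    rw [← hdim]
    exact Nat.sInf_le ⟨Finset.univ, Finset.card_univ, huniv⟩
  haveI : Nonempty V := Fintype.card_pos_iff.mp (by omega)
  by_contra hlt
  push_neg at hlt
  obtain ⟨v, hv⟩ := G.exists_minimal_degree_vertex
  -- v has a neighbor
  obtain ⟨y, hy⟩ := Fintype.exists_ne_of_one_lt_card (by omega) v
  have hdy : G.dist v y ≠ 0 := (hG.pos_dist_of_ne (Ne.symm hy)).ne'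
  obtain ⟨p, -⟩ := exists_walk_of_dist_ne_zero hdy
  obtain ⟨w0, hadj0, -, -⟩ := Walk.exists_eq_cons_of_ne (Ne.symm hy) p
  have hdegpos : 0 < G.degree v := G.degree_pos_iff_exists_adj v |>.mpr ⟨w0, hadj0⟩
  have hdeg1 : G.degree v = 1 := by omega
  -- unique neighbor u
  rw [← card_neighborFinset_eq_degree, Finset.card_eq_one] at hdeg1
  obtain ⟨u, hu⟩ := hdeg1
  have hadj : G.Adj v u := by
    rw [← mem_neighborFinset, hu]; exact Finset.mem_singleton_self u
  have huniq : ∀ w, G.Adj v w → w = u := by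
    intro w hw
    have : w ∈ G.neighborFinset v := (mem_neighborFinset G v w).mpr hw
    rw [hu, Finset.mem_singleton] at this
    exact this
  have hvu : v ≠ u := hadj.ne
  -- build a k-set W containing u and v
  obtain ⟨W, hsubW, -, hWcard⟩ := Finset.exists_subsuperset_card_eq (n := k)
    (Finset.subset_univ ({u, v} : Finset V))
    (le_trans (Finset.card_insert_le u {v}) (by rw [Finset.card_singleton]; omega))
    (by rw [Finset.card_univ]; exact hklecard)
  have huW : u ∈ W := hsubW (Finset.mem_insert_self u {v})
  have hvW : v ∈ W := hsubW (Finset.mem_insert_of_mem (Finset.mem_singleton_self v))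
  obtain ⟨hWres, -⟩ := hbasis W hWcard
  have hnres : ¬ IsResolvingSet G (W.erase u) := by
    intro hres
    have hle : metricDim G ≤ (W.erase u).card := Nat.sInf_le ⟨_, rfl, hres⟩
    rw [Finset.card_erase_of_mem huW, hWcard, hdim] at hle
    omega
  simp only [IsResolvingSet, not_forall] at hnres
  push_neg at hnres
  obtain ⟨x, y', hxy, hall⟩ := hnres
  obtain ⟨w, hwW, hwne⟩ := hWres x y' hxy
  have hwu : w = u := by
    by_contra h'
    exact hwne (hall w (Finset.mem_erase.mpr ⟨h', hwW⟩))
  subst hwu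
  have hxyv : G.dist x v = G.dist y' v := hall v (Finset.mem_erase.mpr ⟨hvu, hvW⟩)
  by_cases hx : x = v
  · subst hx
    rw [SimpleGraph.dist_self] at hxyv
    exact hxy ((hG.dist_eq_zero_iff.mp hxyv.symm).symm)
  · by_cases hy' : y' = v
    · subst hy'
      rw [SimpleGraph.dist_self] at hxyv
      exact hxy (hG.dist_eq_zero_iff.mp hxyv)
    · have e1 := pendant_dist G hG hadj huniq hx
      have e2 := pendant_dist G hG hadj huniq hy'
      rw [e1, e2] at hxyv
      exact hwne (by omega)
end

section
/- If G is a randomly k-dimensional graph with k ≥ 2, then G has no cut vertex (that is, for every vertex v ∈ V(G), the graph G \ {v} obtained by deleting v remains connected). -/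
open SimpleGraph

/-
If `v` were a cut vertex, split `V - v` into sides `A` and `B`; every `A`–`B` geodesic passes
through `v`. In a randomly `k`-dimensional graph a set of vertices resolves exactly when it has at
least `k` elements. If `dist v` is injective on `B`, all of `B` lies on one geodesic from `v` to its
farthest vertex `u`, and `u` together with `k - 1 - |B|` vertices of `A` resolves `G`, too few. So
both sides contain two vertices equidistant from `v`; the points equidistant from such a pair in
`A` include `v` and `B`, which forces `k ≥ 4`. Then every `(k-1)`-set is the equidistant set of a
pair, whence `C(n, k-1) ≤ C(n, 2)` and `n = k + 1`; but then the pair attached to `V - {a, v}`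
must be `{a, v}`, which no vertex of `B` is equidistant from.
-/

open Finset

namespace Nat

theorem choose_le_choose_of_le_half {n a b : ℕ} (hab : a ≤ b) (hb : b ≤ n / 2) :
    n.choose a ≤ n.choose b := by
  induction b, hab using Nat.le_induction with
  | base => exact le_rfl
  | succ b _ ih => exact (ih (by omega)).trans (choose_le_succ_of_lt_half_left (by omega))

theorem choose_two_lt_choose {n r : ℕ} (hr : 3 ≤ r) (hrn : r + 3 ≤ n) :
    n.choose 2 < n.choose r := by
  have h23 : n.choose 2 < n.choose 3 := by
    have hpos : 0 < n.choose 2 := choose_pos (by omega)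
    have hsucc := choose_succ_right_eq n 2
    have : 4 ≤ n - 2 := by omega
    nlinarith
  refine h23.trans_le ?_
  rcases le_or_gt r (n / 2) with hle | hgt
  · exact choose_le_choose_of_le_half hr hle
  · rw [← choose_symm (by omega : r ≤ n)]
    exact choose_le_choose_of_le_half (by omega) (by omega)

end Nat

section

variable {V : Type*} {G : SimpleGraph V}

theorem IsResolvingSet.mono {S T : Finset V} (hST : S ⊆ T) (hS : IsResolvingSet G S) :
    IsResolvingSet G T := fun x y hxy =>
  let ⟨w, hw, hne⟩ := hS x y hxy
  ⟨w, hST hw, hne⟩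

namespace SimpleGraph

theorem Reachable.exists_dist_eq_of_le_dist {u w : V} (huw : G.Reachable u w) {j : ℕ}
    (hj : j ≤ G.dist u w) : ∃ z, G.dist u z = j ∧ j + G.dist z w = G.dist u w := by
  obtain ⟨p, hp⟩ := huw.exists_walk_length_eq_dist
  refine ⟨p.getVert j, ?_⟩
  have hleft : G.dist u (p.getVert j) ≤ j := (dist_le (p.take j)).trans (by simp [Walk.take_length])
  have hright : G.dist (p.getVert j) w ≤ G.dist u w - j :=
    (dist_le (p.drop j)).trans (by simp [Walk.drop_length, hp])
  have htri := (p.take j).reachable.dist_triangle_left w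
  omega

theorem Reachable.dist_eq_add_of_forall_mem_support {x y v : V} (hxy : G.Reachable x y)
    (h : ∀ p : G.Walk x y, v ∈ p.support) : G.dist x y = G.dist x v + G.dist v y := by
  classical
  obtain ⟨p, hp⟩ := hxy.exists_walk_length_eq_dist
  have hv := h p
  have hleft := dist_le (p.takeUntil v hv)
  have hright := dist_le (p.dropUntil v hv)
  have hsplit : (p.takeUntil v hv).length + (p.dropUntil v hv).length = p.length := by
    rw [← Walk.length_append, p.take_spec hv]
  have htri := (p.takeUntil v hv).reachable.dist_triangle_left y
  omega

theorem Connected.injOn_dist_insert (hG : G.Connected) {v : V} {s : Set V}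
    (hs : Set.InjOn (G.dist v) s) : Set.InjOn (G.dist v) (insert v s) := by
  rintro x (rfl | hx) y (rfl | hy) hxy
  · rfl
  · exact hG.dist_eq_zero_iff.1 (hxy.symm.trans dist_self)
  · exact (hG.dist_eq_zero_iff.1 (hxy.trans dist_self)).symm
  · exact hs hx hy hxy

theorem Connected.notMem_of_forall_dist_eq (hG : G.Connected) {x y : V} {S : Finset V}
    (hxy : x ≠ y) (h : ∀ w ∈ S, G.dist x w = G.dist y w) : x ∉ S := fun hx =>
  hG.pos_dist_of_ne hxy.symm |>.ne (dist_self.symm.trans (h x hx))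

theorem Connected.isResolvingSet_erase [Fintype V] [DecidableEq V]
    (hG : G.Connected) (u : V) : IsResolvingSet G (univ.erase u) := by
  intro x y hxy
  by_contra! hall
  rcases eq_or_ne x u with rfl | hx
  · exact hG.notMem_of_forall_dist_eq hxy.symm (fun w hw => (hall w hw).symm)
      (mem_erase.2 ⟨hxy.symm, mem_univ y⟩)
  · exact hG.notMem_of_forall_dist_eq hxy hall (mem_erase.2 ⟨hx, mem_univ x⟩)

end SimpleGraph

namespace RandomlyDimensional

variable [Fintype V] {k : ℕ}

theorem not_isResolvingSet (h : RandomlyDimensional G k) {S : Finset V} (hS : S.card < k) :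
    ¬ IsResolvingSet G S := fun hres =>
  (h.1 ▸ Nat.sInf_le ⟨S, rfl, hres⟩ : k ≤ S.card).not_gt hS

theorem isResolvingSet (h : RandomlyDimensional G k) {S : Finset V} (hS : k ≤ S.card) :
    IsResolvingSet G S :=
  let ⟨W, hWS, hW⟩ := exists_subset_card_eq hS
  (h.2 W hW).1.mono hWS

theorem card_lt_of_forall_dist_eq (h : RandomlyDimensional G k) {x y : V} (hxy : x ≠ y)
    {S : Finset V} (hS : ∀ w ∈ S, G.dist x w = G.dist y w) : S.card < k := by
  by_contra! hk
  obtain ⟨w, hw, hne⟩ := h.isResolvingSet hk x y hxy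
  exact hne (hS w hw)

theorem lt_card (h : RandomlyDimensional G k) (hG : G.Connected) : k < Fintype.card V := by
  classical
  obtain ⟨u⟩ := hG.nonempty
  have hcard := card_erase_of_mem (mem_univ u)
  have := h.not_isResolvingSet.mt (not_not.2 (hG.isResolvingSet_erase u))
  rw [card_univ] at hcard
  have := Fintype.card_pos_iff.2 ⟨u⟩
  omega

/-- Every `(k - 1)`-set is the set of vertices equidistant from some pair, so counting pairs
gives `C(n, k - 1) ≤ C(n, 2)`. -/
theorem card_le_add_one (h : RandomlyDimensional G k) (hk : 4 ≤ k) : Fintype.card V ≤ k + 1 := by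
  classical
  by_contra! hn
  let equidistant : Finset V → Finset V := fun T =>
    univ.filter fun w => ∀ x ∈ T, ∀ y ∈ T, G.dist x w = G.dist y w
  have hsurj : Set.SurjOn equidistant (powersetCard 2 (univ : Finset V))
      (powersetCard (k - 1) (univ : Finset V)) := by
    intro S hS
    rw [mem_coe, mem_powersetCard] at hS
    obtain ⟨x, y, hxy, hxyS⟩ : ∃ x y, x ≠ y ∧ ∀ w ∈ S, G.dist x w = G.dist y w := by
      simpa [IsResolvingSet] using h.not_isResolvingSet (S := S) (by omega)
    refine ⟨{x, y}, by simp [mem_powersetCard, card_pair hxy], ?_⟩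
    have hsub : S ⊆ equidistant {x, y} := fun w hw => by
      have := hxyS w hw
      simp [equidistant, this]
    have hcard : (equidistant {x, y}).card < k :=
      h.card_lt_of_forall_dist_eq hxy fun w hw => (mem_filter.1 hw).2 x (by simp) y (by simp)
    exact (eq_of_subset_of_card_le hsub (by omega)).symm
  have hle := card_le_card_of_surjOn equidistant hsurj
  rw [card_powersetCard, card_powersetCard, card_univ] at hle
  exact (Nat.choose_two_lt_choose (by omega) (by omega)).not_ge hle

end RandomlyDimensional

/-- The metric trace of `v` being a cut vertex with `A` and `B` on either side. -/
structure IsSeparation (G : SimpleGraph V) (v : V) (A B : Finset V) : Prop where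
  notMem_left : v ∉ A
  notMem_right : v ∉ B
  disjoint : Disjoint A B
  mem_or_mem : ∀ x, x ≠ v → x ∈ A ∨ x ∈ B
  left_nonempty : A.Nonempty
  right_nonempty : B.Nonempty
  dist_eq : ∀ a ∈ A, ∀ b ∈ B, G.dist a b = G.dist a v + G.dist v b

theorem exists_isSeparation [Fintype V] (hG : G.Connected) {v : V}
    (hv : ¬ (G.induce ({v}ᶜ : Set V)).Preconnected) : ∃ A B : Finset V, IsSeparation G v A B := by
  classical
  simp only [Preconnected, not_forall] at hv
  obtain ⟨a₀, b₀, hab⟩ := hv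
  let B : Finset V := univ.filter fun y => ∃ hy : y ≠ v, (G.induce {v}ᶜ).Reachable b₀ ⟨y, hy⟩
  have hmemB {y : V} (hy : y ≠ v) : y ∈ B ↔ (G.induce {v}ᶜ).Reachable b₀ ⟨y, hy⟩ := by
    simp only [B, mem_filter, mem_univ, true_and]
    exact ⟨fun ⟨_, hr⟩ => hr, fun hr => ⟨hy, hr⟩⟩
  refine ⟨univ.filter fun x => x ≠ v ∧ x ∉ B, B,
    { notMem_left := by simp
      notMem_right := by simp [B]
      disjoint := disjoint_left.2 fun x hx => (mem_filter.1 hx).2.2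
      mem_or_mem := fun x hx => by simp [hx, em']
      left_nonempty := ⟨a₀, mem_filter.2 ⟨mem_univ _, a₀.2, fun ha => hab ((hmemB a₀.2).1 ha).symm⟩⟩
      right_nonempty := ⟨b₀, (hmemB b₀.2).2 .rfl⟩
      dist_eq := fun a ha b hb => ?_ }⟩
  obtain ⟨ha, haB⟩ := (mem_filter.1 ha).2
  refine (hG a b).dist_eq_add_of_forall_mem_support fun p => ?_
  -- a walk avoiding `v` would lift to `G - v` and join `a` to the component `B` of `b₀`
  by_contra hp
  have hsupp : ∀ x ∈ p.support, x ∈ ({v}ᶜ : Set V) := fun x hx hxv => hp (hxv ▸ hx)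
  exact haB ((hmemB ha).2 (((hmemB (hsupp b p.end_mem_support)).1 hb).trans
    (p.induce _ hsupp).reachable.symm))

namespace IsSeparation

variable {v : V} {A B : Finset V}

theorem symm (hs : IsSeparation G v A B) : IsSeparation G v B A where
  notMem_left := hs.notMem_right
  notMem_right := hs.notMem_left
  disjoint := hs.disjoint.symm
  mem_or_mem x hx := (hs.mem_or_mem x hx).symm
  left_nonempty := hs.right_nonempty
  right_nonempty := hs.left_nonempty
  dist_eq b hb a ha := by
    rw [dist_comm, hs.dist_eq a ha b hb, add_comm, dist_comm, dist_comm (u := v)]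

theorem dist_eq_dist_of_mem_insert [DecidableEq V] (hs : IsSeparation G v A B) {x y : V}
    (hx : x ∈ A) (hy : y ∈ A) (hxy : G.dist v x = G.dist v y) {w : V} (hw : w ∈ insert v B) :
    G.dist x w = G.dist y w := by
  rcases mem_insert.1 hw with rfl | hw
  · rw [dist_comm, hxy, dist_comm]
  · rw [hs.dist_eq x hx w hw, hs.dist_eq y hy w hw, dist_comm, hxy, dist_comm]

theorem dist_add_dist_eq_of_injOn (hs : IsSeparation G v A B) (hG : G.Connected)
    (hB : Set.InjOn (G.dist v) B) {u : V} (hu : u ∈ B) (hmax : ∀ b ∈ B, G.dist v b ≤ G.dist v u)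
    {y : V} (hy : y ∈ B) : G.dist v y + G.dist y u = G.dist v u := by
  obtain ⟨z, hzy, hzu⟩ := (hG v u).exists_dist_eq_of_le_dist (hmax y hy)
  have hyv : 0 < G.dist v y := hG.pos_dist_of_ne fun h => hs.notMem_right (h ▸ hy)
  have hzv : z ≠ v := by
    rintro rfl
    rw [dist_self] at hzy
    omega
  have hzA : z ∉ A := fun hzA => by
    have := hs.dist_eq z hzA u hu
    have : G.dist z v = G.dist v z := dist_comm
    omega
  have hzB : z ∈ B := (hs.mem_or_mem z hzv).resolve_left hzA
  rw [← hB hzB hy hzy]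
  omega

theorem mem_left_of_dist_eq (hs : IsSeparation G v A B) (hG : G.Connected)
    (hB : Set.InjOn (G.dist v) B) {u : V} (hu : u ∈ B) (hmax : ∀ b ∈ B, G.dist v b ≤ G.dist v u)
    {x y : V} (hxy : x ≠ y) (hd : G.dist x u = G.dist y u) :
    x ∈ A ∧ y ∈ A ∧ G.dist v x = G.dist v y := by
  classical
  have hgeod : ∀ c ∈ insert v B, G.dist v c + G.dist c u = G.dist v u := by
    intro c hc
    rcases mem_insert.1 hc with rfl | hc
    · rw [dist_self, zero_add]
    · exact hs.dist_add_dist_eq_of_injOn hG hB hu hmax hc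
  have hA : ∀ a ∈ A, G.dist a u = G.dist v a + G.dist v u ∧ 0 < G.dist v a := fun a ha =>
    ⟨by rw [hs.dist_eq a ha u hu, dist_comm],
      hG.pos_dist_of_ne fun h => hs.notMem_left (h ▸ ha)⟩
  have hcover : ∀ x, x ∈ A ∨ x ∈ insert v B := fun x => by
    rcases eq_or_ne x v with rfl | hx
    · exact .inr (mem_insert_self _ _)
    · exact (hs.mem_or_mem x hx).imp_right mem_insert_of_mem
  rcases hcover x with hx | hx <;> rcases hcover y with hy | hy
  · have := hA x hx; have := hA y hy
    exact ⟨hx, hy, by omega⟩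
  · have := hA x hx; have := hgeod y hy; omega
  · have := hA y hy; have := hgeod x hx; omega
  · have := hgeod x hx; have := hgeod y hy
    exact absurd (hG.injOn_dist_insert hB (by simpa using hx) (by simpa using hy) (by omega)) hxy

variable [Fintype V] {k : ℕ}

theorem card_right_add_one_lt (hs : IsSeparation G v A B) (h : RandomlyDimensional G k)
    (hA : ¬ Set.InjOn (G.dist v) A) : B.card + 1 < k := by
  classical
  simp only [Set.InjOn, not_forall] at hA
  obtain ⟨x, hx, y, hy, hxy, hne⟩ := hA
  rw [← card_insert_of_notMem hs.notMem_right]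
  exact h.card_lt_of_forall_dist_eq hne fun w => hs.dist_eq_dist_of_mem_insert hx hy hxy

/-- Were `dist v` injective on `B`, then `u` together with the part outside `insert v B` of a
`k`-set containing `insert v B` would resolve `G` with fewer than `k` vertices. -/
theorem not_injOn_dist_right (hs : IsSeparation G v A B) (h : RandomlyDimensional G k)
    (hG : G.Connected) (hk : 2 ≤ k) : ¬ Set.InjOn (G.dist v) B := by
  classical
  intro hB
  obtain ⟨u, hu, hmax⟩ := B.exists_max_image (G.dist v) hs.right_nonempty
  have hcollide : ∀ {x y}, x ≠ y → G.dist x u = G.dist y u →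
      x ∈ A ∧ y ∈ A ∧ G.dist v x = G.dist v y :=
    hs.mem_left_of_dist_eq hG hB hu hmax
  by_cases hA : Set.InjOn (G.dist v) A
  · refine h.not_isResolvingSet (S := {u}) (by simp; omega) fun x y hxy => ?_
    refine ⟨u, mem_singleton_self u, fun hd => hxy ?_⟩
    obtain ⟨hx, hy, hv⟩ := hcollide hxy hd
    exact hA hx hy hv
  have hBk := hs.card_right_add_one_lt h hA
  have hvB : (insert v B).card = B.card + 1 := card_insert_of_notMem hs.notMem_right
  obtain ⟨W, hvBW, hW⟩ := exists_superset_card_eq (s := insert v B) (n := k) (by omega)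
    (h.lt_card hG).le
  have hcard : (insert u (W \ insert v B)).card < k := by
    have := card_insert_le u (W \ insert v B)
    have := card_sdiff_of_subset hvBW
    have := hs.right_nonempty.card_pos
    omega
  refine h.not_isResolvingSet hcard fun x y hxy => ?_
  by_cases hd : G.dist x u = G.dist y u
  · obtain ⟨hx, hy, hv⟩ := hcollide hxy hd
    obtain ⟨w, hwW, hw⟩ := h.isResolvingSet hW.ge x y hxy
    have hwvB : w ∉ insert v B := fun hwvB => hw (hs.dist_eq_dist_of_mem_insert hx hy hv hwvB)
    exact ⟨w, mem_insert_of_mem (mem_sdiff.2 ⟨hwW, hwvB⟩), hw⟩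
  · exact ⟨u, mem_insert_self _ _, hd⟩

/-- With `n = k + 1` the non-resolving set `V \ {a, v}` forces `a` and `v` to be equidistant
from every other vertex, but `d(a, b) = d(a, v) + d(v, b)` for `b ∈ B`. -/
theorem card_ne_add_one (hs : IsSeparation G v A B) (h : RandomlyDimensional G k)
    (hG : G.Connected) (hk : 0 < k) : Fintype.card V ≠ k + 1 := by
  classical
  intro hn
  obtain ⟨a, ha⟩ := hs.left_nonempty
  obtain ⟨b, hb⟩ := hs.right_nonempty
  have hav : a ≠ v := fun h => hs.notMem_left (h ▸ ha)
  set S := (univ.erase a).erase v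
  have hS : S.card < k := by
    rw [card_erase_of_mem (by simpa using hav.symm), card_erase_of_mem (mem_univ a), card_univ]
    omega
  have hbS : b ∈ S := by
    simp only [S, mem_erase, mem_univ, and_true]
    exact ⟨fun h => hs.notMem_right (h ▸ hb), fun h => disjoint_left.1 hs.disjoint (h ▸ ha) hb⟩
  have hnotS : ∀ z ∉ S, z = v ∨ z = a := fun z hz => by
    simpa [S, or_iff_not_imp_left] using hz
  have hsep := hs.dist_eq a ha b hb
  have hpos := hG.pos_dist_of_ne hav
  have := h.not_isResolvingSet hS
  simp only [IsResolvingSet, not_forall, not_exists, not_and, not_not] at this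
  obtain ⟨x, y, hxy, hall⟩ := this
  have hd := hall b hbS
  rcases hnotS x (hG.notMem_of_forall_dist_eq hxy hall) with rfl | rfl <;>
    rcases hnotS y (hG.notMem_of_forall_dist_eq hxy.symm fun w hw => (hall w hw).symm)
      with rfl | rfl
  · exact hxy rfl
  · omega
  · omega
  · exact hxy rfl

end IsSeparation

end

theorem randomlyDimensional_no_cutVertex {V : Type*} [Fintype V] (G : SimpleGraph V)
    (hG : G.Connected) (k : ℕ) (hk : 2 ≤ k) (h : RandomlyDimensional G k) :
    ∀ v : V, (G.induce ({v}ᶜ : Set V)).Connected := by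
  intro v
  by_contra hv
  have hn := h.lt_card hG
  obtain ⟨u, hu⟩ := Fintype.exists_ne_of_one_lt_card (by omega) v
  have hpre : ¬ (G.induce ({v}ᶜ : Set V)).Preconnected := fun hpre =>
    hv ((connected_iff _).2 ⟨hpre, ⟨⟨u, hu⟩⟩⟩)
  obtain ⟨A, B, hs⟩ := exists_isSeparation hG hpre
  have hA := hs.symm.not_injOn_dist_right h hG hk
  have hAk := hs.symm.card_right_add_one_lt h (hs.not_injOn_dist_right h hG hk)
  have hA2 : 1 < A.card := by
    by_contra! hA1
    exact hA fun x hx y hy _ => card_le_one.1 hA1 x hx y hy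
  exact hs.card_ne_add_one h hG (by omega) (le_antisymm (h.card_le_add_one (by omega)) hn)
end

section
/- If G is a randomly k-dimensional graph and T ⊆ V(G) is a separating set of G with |T| = k - 1, then the graph G \ T obtained by deleting the vertices of T has exactly two connected components. -/
open SimpleGraph

/-- A walk in `G` whose support stays in `S` yields reachability in `G.induce S`. -/
lemma reach_induce_of_walk {V : Type*} (G : SimpleGraph V) (S : Set V) :
    ∀ {u w : V} (p : G.Walk u w) (hp : ∀ x ∈ p.support, x ∈ S),
      (G.induce S).Reachable ⟨u, hp u p.start_mem_support⟩ ⟨w, hp w p.end_mem_support⟩ := by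
  intro u w p
  induction p with
  | nil => intro hp; rfl
  | cons hadj q ih =>
    intro hp
    have hb : ∀ x ∈ q.support, x ∈ S := fun x hx => hp x (by simp [hx])
    refine Reachable.trans ?_ (ih hb)
    exact SimpleGraph.Adj.reachable (by simpa using hadj)

lemma exists_cross {V : Type*} {G : SimpleGraph V} (hG : G.Connected) (S : Set V)
    {u w : V} (hu : u ∈ S) (hw : w ∈ S)
    (hne : (G.induce S).connectedComponentMk ⟨u, hu⟩ ≠
           (G.induce S).connectedComponentMk ⟨w, hw⟩) :
    ∃ t, t ∉ S ∧ G.dist u w = G.dist u t + G.dist t w := by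
  obtain ⟨p, hp⟩ := hG.exists_walk_length_eq_dist u w
  have hnotall : ¬ ∀ x ∈ p.support, x ∈ S := by
    intro hall
    exact hne (ConnectedComponent.sound (reach_induce_of_walk G S p hall))
  push_neg at hnotall
  obtain ⟨t, htp, htS⟩ := hnotall
  haveI := Classical.decEq V
  refine ⟨t, htS, le_antisymm (hG.dist_triangle) ?_⟩
  calc G.dist u t + G.dist t w ≤ (p.takeUntil t htp).length + (p.dropUntil t htp).length :=
        Nat.add_le_add (SimpleGraph.dist_le _) (SimpleGraph.dist_le _)
    _ = p.length := by rw [← Walk.length_append, p.take_spec htp]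
    _ = G.dist u w := hp

theorem randomlyDimensional_separating_two_components {V : Type*} [Fintype V]
    (G : SimpleGraph V) (hG : G.Connected) (k : ℕ) (h : RandomlyDimensional G k)
    (T : Finset V) (hT : T.card = k - 1)
    (hsep : 2 ≤ Nat.card (G.induce ((↑T : Set V)ᶜ)).ConnectedComponent) :
    Nat.card (G.induce ((↑T : Set V)ᶜ)).ConnectedComponent = 2 := by
  haveI := Classical.decEq V
  set S : Set V := (↑T : Set V)ᶜ with hSdef
  rcases Nat.eq_zero_or_pos k with hk0 | hk
  · -- k = 0 : the empty set resolves, so V is a subsingleton; contradiction with hsep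
    exfalso
    have hres := (h.2 ∅ (by simp [hk0])).1
    have hsub : Subsingleton V := ⟨fun a b => by
      by_contra hab
      obtain ⟨w, hw, _⟩ := hres a b hab
      simp at hw⟩
    have hss : Subsingleton (G.induce S).ConnectedComponent := by
      haveI : Subsingleton S := ⟨fun a b => Subtype.ext (hsub.allEq _ _)⟩
      exact ⟨fun a b => by
        obtain ⟨x, rfl⟩ := a.exists_rep
        obtain ⟨y, rfl⟩ := b.exists_rep
        congr 1
        exact Subsingleton.allEq x y⟩
    haveI : Finite (G.induce S).ConnectedComponent :=
      Finite.of_surjective _ (Quot.mk_surjective)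
    have h1 : Nat.card (G.induce S).ConnectedComponent ≤ 1 :=
      Finite.card_le_one_iff_subsingleton.mpr hss
    omega
  -- k ≥ 1 : T is not a resolving set
  have hmd := h.1
  have hTnr : ¬ IsResolvingSet G T := by
    intro hres
    have : metricDim G ≤ k - 1 := Nat.sInf_le ⟨T, hT, hres⟩
    omega
  rw [IsResolvingSet] at hTnr
  push_neg at hTnr
  obtain ⟨u, v, huv, hrep⟩ := hTnr
  -- u, v are not in T
  have hu : u ∈ S := by
    simp only [hSdef, Set.mem_compl_iff, Finset.mem_coe]
    intro huT
    have := hrep u huT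
    rw [SimpleGraph.dist_self] at this
    exact huv ((hG.dist_eq_zero_iff).mp this.symm).symm
  have hv : v ∈ S := by
    simp only [hSdef, Set.mem_compl_iff, Finset.mem_coe]
    intro hvT
    have := hrep v hvT
    rw [SimpleGraph.dist_self] at this
    exact huv ((hG.dist_eq_zero_iff).mp this)
  -- suppose there are at least 3 components
  by_contra hne2
  have h3 : 3 ≤ Nat.card (G.induce S).ConnectedComponent := by omega
  set cu := (G.induce S).connectedComponentMk ⟨u, hu⟩ with hcu
  set cv := (G.induce S).connectedComponentMk ⟨v, hv⟩ with hcv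
  have hex : ∃ c : (G.induce S).ConnectedComponent, c ≠ cu ∧ c ≠ cv := by
    by_contra hc
    push_neg at hc
    have hsurj : Function.Surjective (fun b : Bool => if b then cu else cv) := by
      intro c
      rcases eq_or_ne c cu with rfl | hne
      · exact ⟨true, rfl⟩
      · exact ⟨false, (hc c hne).symm⟩
    have h2 := Nat.card_le_card_of_surjective _ hsurj
    have hb : Nat.card Bool = 2 := by
      rw [Nat.card_eq_fintype_card]; rfl
    omega
  obtain ⟨c, hc1, hc2⟩ := hex
  obtain ⟨⟨w, hwS⟩, hwc⟩ := c.exists_rep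
  have hwc' : (G.induce S).connectedComponentMk ⟨w, hwS⟩ = c := hwc
  -- w is separated from u and v by T
  obtain ⟨t1, ht1S, ht1⟩ := exists_cross hG S hu hwS
    (by rw [hwc', ← hcu]; exact fun e => hc1 e.symm)
  obtain ⟨t2, ht2S, ht2⟩ := exists_cross hG S hv hwS
    (by rw [hwc', ← hcv]; exact fun e => hc2 e.symm)
  have ht1T : t1 ∈ T := by simpa [hSdef] using ht1S
  have ht2T : t2 ∈ T := by simpa [hSdef] using ht2S
  -- d(u,w) = d(v,w)
  have hduv : G.dist u w = G.dist v w := by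
    have h1 : G.dist v w ≤ G.dist u w := by
      rw [ht1, hrep t1 ht1T]
      exact hG.dist_triangle
    have h2 : G.dist u w ≤ G.dist v w := by
      rw [ht2, ← hrep t2 ht2T]
      exact hG.dist_triangle
    omega
  -- but insert w T is a resolving set of cardinality k
  have hwT : w ∉ T := by simpa [hSdef] using hwS
  have hcard : (insert w T).card = k := by
    rw [Finset.card_insert_of_notMem hwT, hT]
    omega
  obtain ⟨x, hx, hdx⟩ := (h.2 _ hcard).1 u v huv
  rcases Finset.mem_insert.mp hx with rfl | hxT
  · exact hdx hduv
  · exact hdx (hrep x hxT)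
end

section
/- Let G be a randomly k-dimensional graph and T ⊆ V(G) a separating set of G with |T| = k - 1. If u, v ∈ V(G) \ T are distinct vertices such that d(u,t) = d(v,t) for every t ∈ T, then u and v belong to different connected components of the graph G \ T obtained by deleting T. -/
open SimpleGraph

private lemma reachable_induce_of_walk {V : Type*} (G : SimpleGraph V) (s : Set V)
    {a b : V} (p : G.Walk a b) :
    (∀ x ∈ p.support, x ∈ s) → ∀ (ha : a ∈ s) (hb : b ∈ s),
      (G.induce s).Reachable ⟨a, ha⟩ ⟨b, hb⟩ := by
  induction p with
  | nil => exact fun _ _ _ => Reachable.refl _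
  | @cons a c b h q ih =>
    intro hp ha hb
    have hc : c ∈ s := hp c (by simp)
    have hadj : (G.induce s).Adj ⟨a, ha⟩ ⟨c, hc⟩ := h
    exact hadj.reachable.trans (ih (fun x hx => hp x (by simp [hx])) hc hb)

theorem randomlyDimensional_separating_diff_components {V : Type*} [Fintype V]
    (G : SimpleGraph V) (hG : G.Connected) (k : ℕ) (h : RandomlyDimensional G k)
    (T : Finset V) (hT : T.card = k - 1)
    (hsep : 2 ≤ Nat.card (G.induce ((↑T : Set V)ᶜ)).ConnectedComponent)
    (u v : V) (hu : u ∈ ((↑T : Set V)ᶜ)) (hv : v ∈ ((↑T : Set V)ᶜ)) (huv : u ≠ v)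
    (hd : ∀ t ∈ T, G.dist u t = G.dist v t) :
    (G.induce ((↑T : Set V)ᶜ)).connectedComponentMk ⟨u, hu⟩ ≠
      (G.induce ((↑T : Set V)ᶜ)).connectedComponentMk ⟨v, hv⟩ := by
  classical
  intro heq
  rcases Nat.eq_zero_or_pos k with hk0 | hk
  · obtain ⟨w, hw, _⟩ := (h.2 ∅ (by simp [hk0])).1 u v huv
    simp at hw
  · have hnt : Nontrivial ((G.induce ((↑T : Set V)ᶜ)).ConnectedComponent) :=
      Finite.one_lt_card_iff_nontrivial.mp hsep
    obtain ⟨c, hc⟩ := exists_ne ((G.induce ((↑T : Set V)ᶜ)).connectedComponentMk ⟨u, hu⟩)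
    obtain ⟨⟨x, hx⟩, rfl⟩ := c.exists_rep
    have hxT : x ∉ T := by simpa using hx
    have hW : (insert x T).card = k := by
      rw [Finset.card_insert_of_notMem hxT, hT]; omega
    obtain ⟨w, hw, hwd⟩ := (h.2 _ hW).1 u v huv
    rcases Finset.mem_insert.mp hw with rfl | hwT
    · apply hwd
      have key : ∀ (a : V) (ha : a ∈ ((↑T : Set V)ᶜ)),
          (G.induce ((↑T : Set V)ᶜ)).connectedComponentMk ⟨a, ha⟩ ≠
            (G.induce ((↑T : Set V)ᶜ)).connectedComponentMk ⟨w, hx⟩ →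
          ∃ t ∈ T, G.dist a w = G.dist a t + G.dist t w := by
        intro a ha hne
        obtain ⟨p, hp⟩ := hG.exists_walk_length_eq_dist a w
        by_cases hT' : ∃ t ∈ p.support, t ∈ T
        · obtain ⟨t, ht, htT⟩ := hT'
          have h1 : G.dist a t ≤ (p.takeUntil t ht).length := SimpleGraph.dist_le _
          have h2 : G.dist t w ≤ (p.dropUntil t ht).length := SimpleGraph.dist_le _
          have h3 : (p.takeUntil t ht).length + (p.dropUntil t ht).length = p.length := by
            rw [← Walk.length_append, p.take_spec ht]
          have h4 : G.dist a w ≤ G.dist a t + G.dist t w := hG.dist_triangle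
          exact ⟨t, htT, by omega⟩
        · push_neg at hT'
          have hsub : ∀ y ∈ p.support, y ∈ ((↑T : Set V)ᶜ) := by
            intro y hy
            simpa using hT' y hy
          exact absurd (ConnectedComponent.sound
            (reachable_induce_of_walk G _ p hsub ha hx)) hne
      obtain ⟨t1, ht1, e1⟩ := key u hu hc.symm
      obtain ⟨t2, ht2, e2⟩ := key v hv (heq ▸ hc.symm)
      have g1 : G.dist v w ≤ G.dist v t1 + G.dist t1 w := hG.dist_triangle
      have g2 : G.dist u w ≤ G.dist u t2 + G.dist t2 w := hG.dist_triangle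
      have d1 := hd t1 ht1
      have d2 := hd t2 ht2
      omega
    · exact hwd (hd w hwT)
end

section
/- If G is a randomly k-dimensional graph with k ≥ 2, then the maximum degree of G satisfies Δ(G) ≥ k. -/
open SimpleGraph

section Aux

variable {V : Type*} [Fintype V] {G : SimpleGraph V}

/-- From a vertex `z ≠ u` there is a neighbor `y` of `z` one step closer to `u`. -/
lemma aux_dist_step (hG : G.Connected) {z u : V} (h : z ≠ u) :
    ∃ y, G.Adj z y ∧ G.dist y u + 1 = G.dist z u := by
  have hpos : 0 < G.dist z u := hG.pos_dist_of_ne h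
  obtain ⟨p, hp⟩ := hG.exists_walk_length_eq_dist z u
  cases p with
  | nil => exact absurd rfl h
  | @cons _ y _ hadj q =>
    refine ⟨y, hadj, le_antisymm ?_ ?_⟩
    · have h1 : G.dist y u ≤ q.length := dist_le q
      have h2 : q.length + 1 = G.dist z u := by simpa using hp
      omega
    · have h1 : G.dist z y ≤ 1 := by
        have := dist_le hadj.toWalk
        simpa using this
      have h2 : G.dist z u ≤ G.dist z y + G.dist y u := hG.dist_triangle
      omega

lemma aux_nonempty (hk : 2 ≤ k) (h : RandomlyDimensional G k) : Nonempty V := by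
  by_contra h'
  have hres : IsResolvingSet G (∅ : Finset V) := fun u _ _ => absurd ⟨u⟩ h'
  have h2 : metricDim G ≤ 0 := Nat.sInf_le ⟨∅, Finset.card_empty, hres⟩
  have h1 := h.1
  omega

lemma aux_card (hG : G.Connected) (hk : 2 ≤ k) (h : RandomlyDimensional G k) :
    k + 1 ≤ Fintype.card V := by
  classical
  have hne : Nonempty V := aux_nonempty hk h
  obtain ⟨x⟩ := hne
  have hres : IsResolvingSet G (Finset.univ.erase x) := by
    intro u v huv
    by_cases hux : u = x
    · have hvx : v ≠ x := fun hvx => huv (hux.trans hvx.symm)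
      refine ⟨v, Finset.mem_erase.2 ⟨hvx, Finset.mem_univ v⟩, ?_⟩
      have h1 : 0 < G.dist u v := hG.pos_dist_of_ne huv
      have h2 : G.dist v v = 0 := SimpleGraph.dist_self
      omega
    · refine ⟨u, Finset.mem_erase.2 ⟨hux, Finset.mem_univ u⟩, ?_⟩
      have h1 : 0 < G.dist v u := hG.pos_dist_of_ne (Ne.symm huv)
      have h2 : G.dist u u = 0 := SimpleGraph.dist_self
      omega
  have hle : metricDim G ≤ Fintype.card V - 1 :=
    Nat.sInf_le ⟨Finset.univ.erase x, by simp [Finset.card_erase_of_mem], hres⟩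
  have hcard : 1 ≤ Fintype.card V := Fintype.card_pos_iff.2 ⟨x⟩
  have h1 := h.1
  omega

/-- Key lemma: every `(k-1)`-set `S` admits a pair `u ≠ v` equidistant from every
vertex of `S` and distinguished by every vertex outside `S`. -/
lemma aux_key (hG : G.Connected) (hk : 2 ≤ k) (h : RandomlyDimensional G k)
    (S : Finset V) (hS : S.card = k - 1) :
    ∃ u v : V, u ≠ v ∧ u ∉ S ∧ v ∉ S ∧ (∀ x ∈ S, G.dist u x = G.dist v x) ∧
      ∀ w, w ∉ S → G.dist u w ≠ G.dist v w := by
  classical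
  have hnotres : ¬ IsResolvingSet G S := by
    intro hres
    have h2 : metricDim G ≤ k - 1 := Nat.sInf_le ⟨S, hS, hres⟩
    have h1 := h.1
    omega
  rw [IsResolvingSet] at hnotres
  push_neg at hnotres
  obtain ⟨u, v, huv, heq'⟩ := hnotres
  have huS : u ∉ S := by
    intro huS
    have h1 := heq' u huS
    have h2 : G.dist u u = 0 := SimpleGraph.dist_self
    have h3 : 0 < G.dist v u := hG.pos_dist_of_ne (Ne.symm huv)
    omega
  have hvS : v ∉ S := by
    intro hvS
    have h1 := heq' v hvS
    have h2 : G.dist v v = 0 := SimpleGraph.dist_self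
    have h3 : 0 < G.dist u v := hG.pos_dist_of_ne huv
    omega
  refine ⟨u, v, huv, huS, hvS, heq', fun w hw => ?_⟩
  have hcard : (insert w S).card = k := by
    rw [Finset.card_insert_of_notMem hw, hS]; omega
  have hres : IsResolvingSet G (insert w S) := (h.2 _ hcard).1
  obtain ⟨x, hxW, hx⟩ := hres u v huv
  rcases Finset.mem_insert.1 hxW with rfl | hxS
  · exact hx
  · exact absurd (heq' x hxS) hx

/-- If every neighbor of `z` is a neighbor of `v`, distances from other vertices
to `v` are at most those to `z`. -/
lemma aux_twin_le (hG : G.Connected) {z v w : V}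
    (hsub : ∀ p, G.Adj z p → G.Adj v p) (hwz : z ≠ w) :
    G.dist v w ≤ G.dist z w := by
  obtain ⟨y, hadj, hy⟩ := aux_dist_step hG hwz
  have h1 : G.dist v y ≤ 1 := by
    have := dist_le (hsub y hadj).toWalk
    simpa using this
  have h2 : G.dist v w ≤ G.dist v y + G.dist y w := hG.dist_triangle
  omega

end Aux

theorem randomlyDimensional_maxDegree {V : Type*} [Fintype V] (G : SimpleGraph V)
    [DecidableRel G.Adj] (hG : G.Connected) (k : ℕ) (hk : 2 ≤ k)
    (h : RandomlyDimensional G k) : k ≤ G.maxDegree := by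
  classical
  by_contra hcon
  push_neg at hcon
  have hΔ : G.maxDegree ≤ k - 1 := by omega
  have hne : Nonempty V := aux_nonempty hk h
  have hn : k + 1 ≤ Fintype.card V := aux_card hG hk h
  -- the main contradiction machine for the case of a big vertex set
  by_cases hbig : k + 2 ≤ Fintype.card V
  · -- choose a vertex of maximum degree
    obtain ⟨z, hz⟩ := G.exists_maximal_degree_vertex
    have hdegz : (G.neighborFinset z).card ≤ k - 1 := by
      rw [G.card_neighborFinset_eq_degree, ← hz]; exact hΔ
    have hsub0 : G.neighborFinset z ⊆ Finset.univ.erase z := by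
      intro y hy
      exact Finset.mem_erase.2 ⟨fun hyz => G.irrefl (hyz ▸ (G.mem_neighborFinset z y).1 hy),
        Finset.mem_univ y⟩
    obtain ⟨S, hNS, hSsub, hScard⟩ :=
      Finset.exists_subsuperset_card_eq hsub0 hdegz
        (by rw [Finset.card_erase_of_mem (Finset.mem_univ z), Finset.card_univ]; omega)
    have hzS : z ∉ S := fun hzS => (Finset.mem_erase.1 (hSsub hzS)).1 rfl
    obtain ⟨u, v, huv, huS, hvS, heq, hdiff⟩ := aux_key hG hk h S hScard
    -- a general claim, applied to both orderings of (u, v)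
    have main : ∀ a b : V, a ∉ S → b ∉ S →
        (∀ x ∈ S, G.dist a x = G.dist b x) → (∀ w, w ∉ S → G.dist a w ≠ G.dist b w) →
        G.dist a z < G.dist b z → False := by
      intro a b haS hbS habeq habdiff hlt
      by_cases haz : a = z
      · -- `a = z`; show `b` and `z` are twins and find an outside vertex
        subst haz
        -- every neighbor of `a` is a neighbor of `b`
        have hnbr : ∀ p, G.Adj a p → G.Adj b p := by
          intro p hp
          have hpS : p ∈ S := hNS ((G.mem_neighborFinset a p).2 hp)
          have h1 : G.dist a p = 1 := SimpleGraph.dist_eq_one_iff_adj.2 hp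
          have h2 : G.dist b p = 1 := by rw [← habeq p hpS, h1]
          exact SimpleGraph.dist_eq_one_iff_adj.1 h2
        have hnbr' : ∀ p, G.Adj b p → G.Adj a p := by
          have hss : G.neighborFinset a ⊆ G.neighborFinset b := by
            intro p hp
            exact (G.mem_neighborFinset b p).2 (hnbr p ((G.mem_neighborFinset a p).1 hp))
          have hcardle : (G.neighborFinset b).card ≤ (G.neighborFinset a).card := by
            rw [G.card_neighborFinset_eq_degree, G.card_neighborFinset_eq_degree, ← hz]
            exact G.degree_le_maxDegree b
          have heqn : G.neighborFinset a = G.neighborFinset b :=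
            Finset.eq_of_subset_of_card_le hss hcardle
          intro p hp
          exact (G.mem_neighborFinset a p).1 (heqn ▸ (G.mem_neighborFinset b p).2 hp)
        -- find a vertex outside `S ∪ {a, b}`
        have hcardS : (insert a (insert b S)).card ≤ k + 1 := by
          calc (insert a (insert b S)).card ≤ (insert b S).card + 1 :=
                Finset.card_insert_le _ _
            _ ≤ S.card + 1 + 1 := by
                have := Finset.card_insert_le b S; omega
            _ ≤ k + 1 := by omega
        obtain ⟨w, hw⟩ : ∃ w : V, w ∉ insert a (insert b S) := by
          by_contra hcontra
          push_neg at hcontra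
          have : Finset.univ ⊆ insert a (insert b S) := fun x _ => hcontra x
          have := Finset.card_le_card this
          rw [Finset.card_univ] at this
          omega
        have hwa : w ≠ a := fun hwa => hw (by rw [hwa]; exact Finset.mem_insert_self a _)
        have hwb : w ≠ b := fun hwb =>
          hw (Finset.mem_insert.2 (Or.inr (by rw [hwb]; exact Finset.mem_insert_self b _)))
        have hwS : w ∉ S := fun hwS =>
          hw (Finset.mem_insert.2 (Or.inr (Finset.mem_insert.2 (Or.inr hwS))))
        have h1 : G.dist b w ≤ G.dist a w := aux_twin_le hG hnbr (Ne.symm hwa)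
        have h2 : G.dist a w ≤ G.dist b w := aux_twin_le hG hnbr' (Ne.symm hwb)
        exact habdiff w hwS (by omega)
      · -- `a ≠ z`: step from `z` towards `a` through a neighbor in `S`
        obtain ⟨y, hadj, hy⟩ := aux_dist_step hG (fun hza : z = a => haz hza.symm)
        have hyS : y ∈ S := hNS ((G.mem_neighborFinset z y).2 hadj)
        have h1 : G.dist a y = G.dist b y := habeq y hyS
        have h2 : G.dist y z ≤ 1 := by
          have := dist_le hadj.symm.toWalk
          simpa using this
        have h3 : G.dist b z ≤ G.dist b y + G.dist y z := hG.dist_triangle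
        have h4 : G.dist y a + 1 = G.dist z a := hy
        have h5 : G.dist a y = G.dist y a := SimpleGraph.dist_comm
        have h6 : G.dist b y = G.dist y b := SimpleGraph.dist_comm
        have h7 : G.dist a z = G.dist z a := SimpleGraph.dist_comm
        omega
    rcases lt_or_gt_of_ne (fun he => hdiff z hzS he) with hlt | hgt
    · exact main u v huS hvS heq hdiff hlt
    · exact main v u hvS huS (fun x hx => (heq x hx).symm)
        (fun w hw hc => hdiff w hw hc.symm) hgt
  · -- small case: `Fintype.card V = k + 1`, show the graph is complete
    have hcard : Fintype.card V = k + 1 := by omega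
    -- every pair of distinct vertices is equidistant from every third vertex
    have P : ∀ a b : V, a ≠ b → ∀ t : V, t ≠ a → t ≠ b → G.dist a t = G.dist b t := by
      intro a b hab t hta htb
      have hScard : (Finset.univ \ {a, b}).card = k - 1 := by
        rw [Finset.card_sdiff_of_subset (Finset.subset_univ _), Finset.card_univ,
          Finset.card_insert_of_notMem (by simpa using hab), Finset.card_singleton, hcard]
        omega
      obtain ⟨u, v, huv, huS, hvS, heq, _⟩ := aux_key hG hk h _ hScard
      have htS : t ∈ Finset.univ \ ({a, b} : Finset V) := by
        simp [hta, htb]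
      have hu : u = a ∨ u = b := by
        have := huS
        simp only [Finset.mem_sdiff, Finset.mem_univ, true_and, not_not] at this
        simpa using this
      have hv : v = a ∨ v = b := by
        have := hvS
        simp only [Finset.mem_sdiff, Finset.mem_univ, true_and, not_not] at this
        simpa using this
      rcases hu with rfl | rfl <;> rcases hv with rfl | rfl
      · exact absurd rfl huv
      · exact heq t htS
      · exact (heq t htS).symm
      · exact absurd rfl huv
    -- hence the graph is complete
    have hadj : ∀ a b : V, a ≠ b → G.Adj a b := by
      intro a b hab
      obtain ⟨t, hta, ht⟩ := aux_dist_step hG hab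
      by_cases htb : t = b
      · exact htb ▸ hta
      · have hta' : t ≠ a := fun hta' => G.irrefl (hta' ▸ hta)
        have h1 : G.dist a t = 1 := SimpleGraph.dist_eq_one_iff_adj.2 hta
        have h2 : G.dist b t = 1 := (P a b hab t hta' htb) ▸ h1
        have h3 : G.dist a b = G.dist t b := P a t (Ne.symm hta') b (Ne.symm hab) (Ne.symm htb)
        have h4 : G.dist t b = 1 := SimpleGraph.dist_comm.trans h2
        exact SimpleGraph.dist_eq_one_iff_adj.1 (h3.trans h4)
    obtain ⟨a⟩ := hne
    have hdeg : k ≤ G.degree a := by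
      have hsub : Finset.univ.erase a ⊆ G.neighborFinset a := by
        intro b hb
        obtain ⟨hba, _⟩ := Finset.mem_erase.1 hb
        exact (G.mem_neighborFinset a b).2 (hadj a b (Ne.symm hba))
      have := Finset.card_le_card hsub
      rw [Finset.card_erase_of_mem (Finset.mem_univ a), Finset.card_univ,
        G.card_neighborFinset_eq_degree] at this
      omega
    have := G.degree_le_maxDegree a
    omega
end

section
/- If G is a randomly k-dimensional graph and u, v are two distinct non-adjacent vertices of G, then deg(u) + deg(v) ≥ k. -/
open SimpleGraph

/-- On a shortest path from `x` to `u`, the vertex before `u` is a neighbor of `u`. -/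
lemma neighbor_dist_aux {V : Type*} {G : SimpleGraph V} (hG : G.Connected) {x u : V}
    (hx : x ≠ u) : ∃ a, G.Adj u a ∧ G.dist x a + 1 = G.dist x u := by
  obtain ⟨p, hp⟩ := hG.exists_walk_length_eq_dist u x
  cases p with
  | nil => exact absurd rfl hx.symm
  | @cons _ a _ hadj q =>
    refine ⟨a, hadj, ?_⟩
    have h1 : G.dist x a ≤ q.length := by
      rw [SimpleGraph.dist_comm]; exact SimpleGraph.dist_le q
    have h2 : G.dist u x ≤ G.dist u a + G.dist a x := hG.dist_triangle
    have h3 : G.dist u a = 1 := SimpleGraph.dist_eq_one_iff_adj.mpr hadj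
    have h4 : G.dist x u = G.dist u x := SimpleGraph.dist_comm ..
    have h5 : G.dist a x = G.dist x a := SimpleGraph.dist_comm ..
    simp only [SimpleGraph.Walk.length_cons] at hp
    omega

/-- If `x, y` have equal distances to every neighbor of `u` and `x ≠ u ≠ y`, then
they have equal distances to `u`. -/
lemma eq_dist_center_aux {V : Type*} {G : SimpleGraph V} (hG : G.Connected) {x y u : V}
    (hxy : ∀ a, G.Adj u a → G.dist x a = G.dist y a)
    (hx : x ≠ u) (hy : y ≠ u) : G.dist x u = G.dist y u := by
  obtain ⟨a, ha, hda⟩ := neighbor_dist_aux hG hx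
  obtain ⟨b, hb, hdb⟩ := neighbor_dist_aux hG hy
  have h1 : G.dist y u ≤ G.dist y a + G.dist a u := hG.dist_triangle
  have h2 : G.dist x u ≤ G.dist x b + G.dist b u := hG.dist_triangle
  have h3 : G.dist a u = 1 := SimpleGraph.dist_eq_one_iff_adj.mpr ha.symm
  have h4 : G.dist b u = 1 := SimpleGraph.dist_eq_one_iff_adj.mpr hb.symm
  have h5 := hxy a ha
  have h6 := hxy b hb
  omega

theorem randomlyDimensional_degree_sum {V : Type*} [Fintype V] (G : SimpleGraph V)
    [DecidableRel G.Adj] (hG : G.Connected) (k : ℕ) (h : RandomlyDimensional G k)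
    (u v : V) (huv : u ≠ v) (hadj : ¬ G.Adj u v) :
    k ≤ G.degree u + G.degree v := by
  classical
  rcases Nat.eq_zero_or_pos k with hk0 | hk
  · simp [hk0]
  obtain ⟨hdim, hbasis⟩ := h
  set n := Fintype.card V with hn
  have hres : ∀ W : Finset V, W.card = k → IsResolvingSet G W :=
    fun W hW => (hbasis W hW).1
  have hsmall : ∀ W : Finset V, W.card < k → ¬ IsResolvingSet G W := by
    intro W hW hr
    have : metricDim G ≤ W.card := Nat.sInf_le ⟨W, rfl, hr⟩
    omega
  have hpos : ∀ a b : V, a ≠ b → G.dist a b ≠ 0 := fun a b hab =>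
    Nat.pos_iff_ne_zero.mp (hG.pos_dist_of_ne hab)
  -- k ≤ n - 1
  have hkn : k ≤ n - 1 := by
    have hresv : IsResolvingSet G (Finset.univ.erase v) := by
      intro a b hab
      by_cases hav : a = v
      · subst hav
        refine ⟨b, Finset.mem_erase.mpr ⟨hab.symm, Finset.mem_univ b⟩, ?_⟩
        rw [SimpleGraph.dist_self]
        exact (hpos a b hab)
      · refine ⟨a, Finset.mem_erase.mpr ⟨hav, Finset.mem_univ a⟩, ?_⟩
        rw [SimpleGraph.dist_self]
        exact fun hc => hpos b a hab.symm hc.symm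
    have h1 : metricDim G ≤ (Finset.univ.erase v).card := Nat.sInf_le ⟨_, rfl, hresv⟩
    have h2 : (Finset.univ.erase v).card = n - 1 := by
      rw [Finset.card_erase_of_mem (Finset.mem_univ v), Finset.card_univ]
    omega
  have hn1 : 1 ≤ n := Fintype.card_pos_iff.mpr ⟨u⟩
  have hnk : k + 1 ≤ n := by omega
  rcases le_or_gt (n - 1) k with hcase | hcase
  · -- k = n - 1 : derive contradiction
    exfalso
    have hk_eq : k = n - 1 := le_antisymm hkn hcase
    -- every pair is a pair of "distance twins"
    have hpair : ∀ x y : V, x ≠ y → ∀ w : V, w ≠ x → w ≠ y →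
        G.dist x w = G.dist y w := by
      intro x y hxy w hwx hwy
      set W : Finset V := (Finset.univ.erase x).erase y with hW
      have hWcard : W.card = n - 2 := by
        have hym : y ∈ Finset.univ.erase x :=
          Finset.mem_erase.mpr ⟨hxy.symm, Finset.mem_univ y⟩
        rw [hW, Finset.card_erase_of_mem hym, Finset.card_erase_of_mem (Finset.mem_univ x),
          Finset.card_univ]
        omega
      have hnotres : ¬ IsResolvingSet G W := by
        apply hsmall; omega
      rw [IsResolvingSet] at hnotres
      push_neg at hnotres
      obtain ⟨a, b, hab, heq⟩ := hnotres
      have hmemW : ∀ c : V, c ≠ y → c ≠ x → c ∈ W := by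
        intro c h1 h2
        exact Finset.mem_erase.mpr ⟨h1, Finset.mem_erase.mpr ⟨h2, Finset.mem_univ c⟩⟩
      have hanW : a ∉ W := by
        intro hmem
        have := heq a hmem
        rw [SimpleGraph.dist_self] at this
        exact hpos b a hab.symm this.symm
      have hbnW : b ∉ W := by
        intro hmem
        have := heq b hmem
        rw [SimpleGraph.dist_self] at this
        exact hpos a b hab this
      have ha' : a = x ∨ a = y := by
        by_contra hc; push_neg at hc
        exact hanW (hmemW a hc.2 hc.1)
      have hb' : b = x ∨ b = y := by
        by_contra hc; push_neg at hc
        exact hbnW (hmemW b hc.2 hc.1)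
      have hwW : w ∈ W := hmemW w hwy hwx
      rcases ha' with rfl | rfl
      · rcases hb' with rfl | rfl
        · exact absurd rfl hab
        · exact heq w hwW
      · rcases hb' with rfl | rfl
        · exact (heq w hwW).symm
        · exact absurd rfl hab
    -- get a neighbor a of u on a shortest path from v
    obtain ⟨a, ha, hda⟩ := neighbor_dist_aux hG (Ne.symm huv)
    have hau : a ≠ u := ha.ne'
    have hav : a ≠ v := by rintro rfl; exact hadj ha
    have h1 := hpair u a (Ne.symm hau) v (Ne.symm huv) (Ne.symm hav)
    have c1 : G.dist u v = G.dist v u := SimpleGraph.dist_comm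
    have c2 : G.dist a v = G.dist v a := SimpleGraph.dist_comm
    omega
  · -- main case : k ≤ n - 2
    by_contra hcon
    push_neg at hcon
    set A : Finset V := G.neighborFinset u ∪ G.neighborFinset v with hA
    have hAcard : A.card < k := by
      have h1 : A.card ≤ (G.neighborFinset u).card + (G.neighborFinset v).card :=
        Finset.card_union_le _ _
      rw [SimpleGraph.card_neighborFinset_eq_degree,
        SimpleGraph.card_neighborFinset_eq_degree] at h1
      omega
    set C : Finset V := (Finset.univ.erase u).erase v with hC
    have hCcard : C.card = n - 2 := by
      have hvm : v ∈ Finset.univ.erase u :=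
        Finset.mem_erase.mpr ⟨huv.symm, Finset.mem_univ v⟩
      rw [hC, Finset.card_erase_of_mem hvm, Finset.card_erase_of_mem (Finset.mem_univ u),
        Finset.card_univ]
      omega
    have hmemC : ∀ c : V, c ≠ v → c ≠ u → c ∈ C := fun c h1 h2 =>
      Finset.mem_erase.mpr ⟨h1, Finset.mem_erase.mpr ⟨h2, Finset.mem_univ c⟩⟩
    have hmemA : ∀ a : V, G.Adj u a ∨ G.Adj v a → a ∈ A := by
      intro a haa
      rw [hA, Finset.mem_union, SimpleGraph.mem_neighborFinset, SimpleGraph.mem_neighborFinset]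
      exact haa
    have hAC : A ⊆ C := by
      intro a haa
      rw [hA, Finset.mem_union, SimpleGraph.mem_neighborFinset, SimpleGraph.mem_neighborFinset] at haa
      apply hmemC
      · rintro rfl
        rcases haa with h1 | h1
        · exact hadj h1
        · exact G.irrefl h1
      · rintro rfl
        rcases haa with h1 | h1
        · exact G.irrefl h1
        · exact hadj (h1.symm)
    obtain ⟨W, hAW, hWC, hWcard⟩ :=
      Finset.exists_subsuperset_card_eq hAC (le_of_lt hAcard) (by omega)
    have huW : u ∉ W := fun hm => by
      have := hWC hm
      rw [hC, Finset.mem_erase, Finset.mem_erase] at this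
      exact this.2.1 rfl
    have hvW : v ∉ W := fun hm => by
      have := hWC hm
      rw [hC, Finset.mem_erase] at this
      exact this.1 rfl
    -- pick w0 ∈ W \ A
    have hWA : ¬ W ⊆ A := fun hs => by
      have := Finset.card_le_card hs; omega
    obtain ⟨w0, hw0W, hw0A⟩ := Finset.not_subset.mp hWA
    set W' : Finset V := W.erase w0 with hW'
    have hW'card : W'.card = k - 1 := by
      rw [hW', Finset.card_erase_of_mem hw0W, hWcard]
    have hnotres : ¬ IsResolvingSet G W' := by apply hsmall; omega
    rw [IsResolvingSet] at hnotres
    push_neg at hnotres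
    obtain ⟨x, y, hxy, heq⟩ := hnotres
    have hAW' : A ⊆ W' := by
      intro a haa
      refine Finset.mem_erase.mpr ⟨?_, hAW haa⟩
      rintro rfl; exact hw0A haa
    -- a vertex z ∉ W' with z ∉ {x, y} unresolved... rather: insert z W' resolves (x,y)
    have hkey : ∀ z : V, z ∉ W' → G.dist x z ≠ G.dist y z := by
      intro z hz
      have hcard : (insert z W').card = k := by
        rw [Finset.card_insert_of_notMem hz, hW'card]; omega
      obtain ⟨w, hw, hwne⟩ := hres _ hcard x y hxy
      rcases Finset.mem_insert.mp hw with rfl | hw'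
      · exact hwne
      · exact absurd (heq w hw') hwne
    have huW' : u ∉ W' := fun hm => huW (Finset.mem_of_mem_erase hm)
    have hvW' : v ∉ W' := fun hm => hvW (Finset.mem_of_mem_erase hm)
    -- x = u or y = u
    have hxu : x = u ∨ y = u := by
      by_contra hc; push_neg at hc
      refine hkey u huW' ?_
      refine eq_dist_center_aux hG ?_ hc.1 hc.2
      intro a ha
      exact heq a (hAW' (hmemA a (Or.inl ha)))
    have hxv : x = v ∨ y = v := by
      by_contra hc; push_neg at hc
      refine hkey v hvW' ?_
      refine eq_dist_center_aux hG ?_ hc.1 hc.2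
      intro a ha
      exact heq a (hAW' (hmemA a (Or.inr ha)))
    have hdeq : ∀ w ∈ W', G.dist u w = G.dist v w := by
      rcases hxu with rfl | rfl
      · rcases hxv with rfl | rfl
        · exact absurd rfl huv
        · exact heq
      · rcases hxv with rfl | rfl
        · exact fun w hw => (heq w hw).symm
        · exact absurd rfl huv
    -- hence N(u) = N(v)
    have hNN : ∀ a : V, G.Adj u a ↔ G.Adj v a := by
      intro a
      constructor
      · intro ha
        have hmem : a ∈ W' := hAW' (hmemA a (Or.inl ha))
        have h1 : G.dist u a = 1 := SimpleGraph.dist_eq_one_iff_adj.mpr ha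
        have := hdeq a hmem
        rw [h1] at this
        exact SimpleGraph.dist_eq_one_iff_adj.mp this.symm
      · intro ha
        have hmem : a ∈ W' := hAW' (hmemA a (Or.inr ha))
        have h1 : G.dist v a = 1 := SimpleGraph.dist_eq_one_iff_adj.mpr ha
        have := hdeq a hmem
        rw [h1] at this
        exact SimpleGraph.dist_eq_one_iff_adj.mp this
    -- twin lemma: dist u w = dist v w for all w ≠ u, v
    have htwin : ∀ w : V, w ≠ u → w ≠ v → G.dist u w = G.dist v w := by
      intro w hwu hwv
      have hle : ∀ p q : V, (∀ a, G.Adj p a → G.Adj q a) → p ≠ w → q ≠ w →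
          G.dist q w ≤ G.dist p w := by
        intro p q hpq hpw hqw
        obtain ⟨a, ha, hda⟩ := neighbor_dist_aux hG (Ne.symm hpw)
        have h1 : G.dist q w ≤ G.dist q a + G.dist a w := hG.dist_triangle
        have h2 : G.dist q a = 1 := SimpleGraph.dist_eq_one_iff_adj.mpr (hpq a ha)
        have h3 : G.dist a w = G.dist w a := SimpleGraph.dist_comm ..
        have h4 : G.dist p w = G.dist w p := SimpleGraph.dist_comm ..
        omega
      have h1 := hle u v (fun a ha => (hNN a).mp ha) (Ne.symm hwu) (Ne.symm hwv)
      have h2 := hle v u (fun a ha => (hNN a).mpr ha) (Ne.symm hwv) (Ne.symm hwu)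
      omega
    -- final contradiction: a k-set inside C must resolve (u, v)
    obtain ⟨W2, hW2C, hW2card⟩ := Finset.exists_subset_card_eq (s := C) (n := k) (by omega)
    obtain ⟨w, hw, hwne⟩ := hres W2 hW2card u v huv
    have hwC := hW2C hw
    rw [hC, Finset.mem_erase, Finset.mem_erase] at hwC
    exact hwne (htwin w hwC.2.1 hwC.1)
end

section
/- If G is a randomly k-dimensional graph of order at least 2, then the clique number of G satisfies ω(G) ≤ k + 1. -/
open SimpleGraph

theorem randomlyDimensional_cliqueNum_le {V : Type*} [Fintype V] (G : SimpleGraph V)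
    (hG : G.Connected) (hcard : 2 ≤ Fintype.card V) (k : ℕ)
    (h : RandomlyDimensional G k) : G.cliqueNum ≤ k + 1 := by
  classical
  by_contra h'
  push_neg at h'
  obtain ⟨s, hs⟩ := G.exists_isNClique_cliqueNum
  have hcard2 : k + 2 ≤ s.card := by rw [hs.card_eq]; omega
  -- pick two distinct vertices u v in s
  obtain ⟨u, hu⟩ : ∃ u, u ∈ s := Finset.card_pos.mp (by omega)
  obtain ⟨v, hv⟩ : ∃ v, v ∈ s.erase u := Finset.card_pos.mp (by
    rw [Finset.card_erase_of_mem hu]; omega)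
  have hvu : v ≠ u := Finset.ne_of_mem_erase hv
  have hvs : v ∈ s := Finset.mem_of_mem_erase hv
  -- the rest of the clique
  have hk : k ≤ ((s.erase u).erase v).card := by
    rw [Finset.card_erase_of_mem hv, Finset.card_erase_of_mem hu]; omega
  obtain ⟨W, hWsub, hWcard⟩ := Finset.exists_subset_card_eq hk
  have hres : IsResolvingSet G W := (h.2 W hWcard).1
  obtain ⟨w, hw, hdist⟩ := hres u v (Ne.symm hvu)
  have hw' : w ∈ (s.erase u).erase v := hWsub hw
  have hwv : w ≠ v := Finset.ne_of_mem_erase hw'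
  have hw'' : w ∈ s.erase u := Finset.mem_of_mem_erase hw'
  have hwu : w ≠ u := Finset.ne_of_mem_erase hw''
  have hws : w ∈ s := Finset.mem_of_mem_erase hw''
  have h1 : G.dist u w = 1 := dist_eq_one_iff_adj.mpr (hs.isClique hu hws (Ne.symm hwu))
  have h2 : G.dist v w = 1 := dist_eq_one_iff_adj.mpr (hs.isClique hvs hws (Ne.symm hwv))
  exact hdist (h1.trans h2.symm)
end

section
/- Let G be a randomly k-dimensional graph of order at least 2. Then ω(G) = k + 1 if and only if G is a complete graph. -/
open SimpleGraph

/-!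
Every `k`-set resolves a randomly `k`-dimensional graph, so fewer than `k` vertices are
equidistant from any two distinct vertices. Suppose `ω(G) = k + 1` but `G ≠ ⊤`. A maximum clique
`s` then misses some vertex `z`, and `z` separates every pair `u ≠ v` of `s` (otherwise `z` and
`s \ {u, v}` are `k` vertices equidistant from `u` and `v`); as the distances from `z` to a clique
take at most two consecutive values, `k ≤ 1`. But a connected non-complete graph contains an
induced path `x - a - b`, and `a` is equidistant from `x` and `b`, so `k ≥ 2`. Conversely,
`β(Kₙ) = n - 1` and `ω(Kₙ) = n`.
-/

open Finset

section

variable {V : Type*}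

lemma card_lt_of_forall_dist_eq {G : SimpleGraph V} {k : ℕ}
    (hres : ∀ W : Finset V, #W = k → IsResolvingSet G W) {u v : V} (huv : u ≠ v)
    {S : Finset V} (hS : ∀ w ∈ S, G.dist u w = G.dist v w) : #S < k := by
  by_contra! hk
  obtain ⟨W, hWS, hW⟩ := exists_subset_card_eq hk
  obtain ⟨w, hw, hne⟩ := hres W hW u v huv
  exact hne (hS w (hWS hw))

lemma injOn_dist_of_notMem_isNClique {G : SimpleGraph V} {k : ℕ}
    (hres : ∀ W : Finset V, #W = k → IsResolvingSet G W) {s : Finset V}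
    (hs : G.IsNClique (k + 1) s) {z : V} (hz : z ∉ s) : Set.InjOn (G.dist z) s := by
  classical
  intro u hu v hv hzuv
  by_contra huv
  have hS : ∀ w ∈ insert z (s \ {u, v}), G.dist u w = G.dist v w := by
    intro w hw
    rcases mem_insert.mp hw with rfl | hw
    · rw [dist_comm, hzuv, dist_comm]
    · obtain ⟨hws, hwuv⟩ := mem_sdiff.mp hw
      simp only [mem_insert, mem_singleton, not_or] at hwuv
      rw [dist_eq_one_iff_adj.mpr (hs.isClique hu hws (Ne.symm hwuv.1)),
        dist_eq_one_iff_adj.mpr (hs.isClique hv hws (Ne.symm hwuv.2))]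
  have huvs : {u, v} ⊆ s := insert_subset hu (singleton_subset_iff.mpr hv)
  have hcard : #(insert z (s \ {u, v})) = k := by
    have := card_le_card huvs
    rw [card_insert_of_notMem fun h ↦ hz (mem_sdiff.mp h).1, card_sdiff_of_subset huvs,
      hs.card_eq, card_pair huv] at *
    omega
  exact (card_lt_of_forall_dist_eq hres huv hS).ne hcard

namespace SimpleGraph

variable {G : SimpleGraph V}

lemma IsClique.dist_le_one {s : Set V} (hs : G.IsClique s) {u v : V} (hu : u ∈ s) (hv : v ∈ s) :
    G.dist u v ≤ 1 := by
  rcases eq_or_ne u v with rfl | huv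
  · simp
  · exact (dist_eq_one_iff_adj.mpr (hs hu hv huv)).le

lemma IsClique.card_le_two_of_injOn_dist (hG : G.Connected) {s : Finset V}
    (hs : G.IsClique (s : Set V)) {z : V} (hinj : Set.InjOn (G.dist z) s) : #s ≤ 2 := by
  classical
  rcases s.eq_empty_or_nonempty with rfl | hne
  · simp
  obtain ⟨u, hu, hmin⟩ := s.exists_min_image (G.dist z) hne
  have hsub : s.image (G.dist z) ⊆ Icc (G.dist z u) (G.dist z u + 1) := by
    intro n hn
    obtain ⟨v, hv, rfl⟩ := mem_image.mp hn
    have := hs.dist_le_one (mem_coe.mpr hu) (mem_coe.mpr hv)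
    exact mem_Icc.mpr ⟨hmin v hv, (hG.dist_triangle (v := u)).trans (by omega)⟩
  calc #s = #(s.image (G.dist z)) := (card_image_of_injOn hinj).symm
    _ ≤ #(Icc (G.dist z u) (G.dist z u + 1)) := card_le_card hsub
    _ = 2 := by simp only [Nat.card_Icc]; omega

lemma Connected.exists_adj_adj_ne_of_ne_top (hG : G.Connected) (hne : G ≠ ⊤) :
    ∃ x a b, G.Adj x a ∧ G.Adj a b ∧ x ≠ b := by
  obtain ⟨u, v, huv, hnadj⟩ : ∃ u v, u ≠ v ∧ ¬ G.Adj u v := by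
    contrapose! hne
    ext u v
    exact ⟨Adj.ne, hne u v⟩
  obtain ⟨p, hp⟩ := hG.exists_walk_length_eq_dist u v
  obtain ⟨x, a, b, hxa, hab, -, hxb⟩ :=
    p.exists_adj_adj_not_adj_ne hp (hG.one_lt_dist_of_ne_of_not_adj huv hnadj)
  exact ⟨x, a, b, hxa, hab, hxb⟩

variable [Fintype V]

lemma cliqueNum_top : (⊤ : SimpleGraph V).cliqueNum = Fintype.card V := by
  refine le_antisymm ?_ ?_
  · obtain ⟨s, hs⟩ := (⊤ : SimpleGraph V).exists_isNClique_cliqueNum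
    exact hs.card_eq ▸ card_le_univ s
  · have huniv : (⊤ : SimpleGraph V).IsClique ((univ : Finset V) : Set V) := by
      rw [coe_univ, isClique_univ]
    exact card_univ (α := V) ▸ huniv.card_le_cliqueNum

lemma isResolvingSet_top_iff {W : Finset V} :
    IsResolvingSet ⊤ W ↔ Fintype.card V - 1 ≤ #W := by
  classical
  constructor
  · intro hW
    by_contra! hlt
    have : 1 < #Wᶜ := by rw [card_compl]; omega
    obtain ⟨u, hu, v, hv, huv⟩ := one_lt_card.mp this
    obtain ⟨w, hw, hne⟩ := hW u v huv
    rw [mem_compl] at hu hv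
    rw [dist_top_of_ne (ne_of_mem_of_not_mem hw hu).symm,
      dist_top_of_ne (ne_of_mem_of_not_mem hw hv).symm] at hne
    exact hne rfl
  · intro hW u v huv
    by_cases hu : u ∈ W
    · exact ⟨u, hu, by simp [dist_top_of_ne huv.symm]⟩
    by_cases hv : v ∈ W
    · exact ⟨v, hv, by simp [dist_top_of_ne huv]⟩
    have hsub : W ⊆ (univ.erase u).erase v := fun w hw ↦
      mem_erase.mpr ⟨ne_of_mem_of_not_mem hw hv, mem_erase.mpr ⟨ne_of_mem_of_not_mem hw hu,
        mem_univ w⟩⟩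
    have := card_le_card hsub
    rw [card_erase_of_mem (mem_erase.mpr ⟨huv.symm, mem_univ v⟩), card_erase_of_mem (mem_univ u),
      card_univ] at this
    have : 2 ≤ Fintype.card V := Fintype.one_lt_card_iff.mpr ⟨u, v, huv⟩
    omega

lemma metricDim_top [Nonempty V] : metricDim (⊤ : SimpleGraph V) = Fintype.card V - 1 := by
  obtain ⟨W, -, hW⟩ := exists_subset_card_eq (s := (univ : Finset V))
    (n := Fintype.card V - 1) (by simp)
  refine le_antisymm (Nat.sInf_le ⟨W, hW, isResolvingSet_top_iff.mpr hW.ge⟩) ?_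
  refine le_csInf ⟨_, W, rfl, isResolvingSet_top_iff.mpr hW.ge⟩ ?_
  rintro _ ⟨W', rfl, hW'⟩
  exact isResolvingSet_top_iff.mp hW'

end SimpleGraph

end

theorem randomlyDimensional_cliqueNum_eq_iff {V : Type*} [Fintype V] (G : SimpleGraph V)
    (hG : G.Connected) (hcard : 2 ≤ Fintype.card V) (k : ℕ)
    (h : RandomlyDimensional G k) : G.cliqueNum = k + 1 ↔ G = ⊤ := by
  constructor
  · intro hω
    by_contra hne
    have hres : ∀ W : Finset V, #W = k → IsResolvingSet G W := fun W hW ↦ (h.2 W hW).1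
    have hk : 2 ≤ k := by
      obtain ⟨x, a, b, hxa, hab, hxb⟩ := hG.exists_adj_adj_ne_of_ne_top hne
      have := card_lt_of_forall_dist_eq hres hxb (S := {a})
        (by simp [dist_eq_one_iff_adj.mpr hxa, dist_eq_one_iff_adj.mpr hab.symm])
      simpa [Nat.lt_iff_add_one_le] using this
    obtain ⟨s, hs⟩ := G.exists_isNClique_cliqueNum
    rw [hω] at hs
    obtain ⟨z, hz⟩ : ∃ z, z ∉ s := by
      by_contra! hall
      apply hne
      rw [← isClique_univ, ← coe_univ, ← eq_univ_of_forall hall]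
      exact hs.isClique
    have := hs.isClique.card_le_two_of_injOn_dist hG (injOn_dist_of_notMem_isNClique hres hs hz)
    rw [hs.card_eq] at this
    omega
  · rintro rfl
    have : Nonempty V := Fintype.card_pos_iff.mp (by omega)
    rw [cliqueNum_top, ← h.1, metricDim_top]
    omega
end

section
/- If G is a finite simple connected graph with res(G) = k, then every two distinct vertices of G have at most k - 1 common neighbors, i.e., |N(u) ∩ N(v)| ≤ k - 1 for all distinct u, v ∈ V(G). -/
open SimpleGraph

theorem resolvingNumber_common_neighbors {V : Type*} [Fintype V] (G : SimpleGraph V)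
    (hG : G.Connected) (k : ℕ) (hres : resolvingNumber G = k) :
    ∀ u v : V, u ≠ v → (G.neighborSet u ∩ G.neighborSet v).ncard ≤ k - 1 := by
  classical
  intro u v huv
  -- the set of possible `k`'s is nonempty: `Fintype.card V` works
  have hne : (Finset.univ : Finset V).card ∈
      {k | ∀ W : Finset V, W.card = k → IsResolvingSet G W} := by
    intro W hW a b hab
    have hWuniv : W = Finset.univ := by
      apply Finset.eq_univ_of_card
      simpa using hW
    refine ⟨a, by simp [hWuniv], ?_⟩
    have h0 : G.dist a a = 0 := by simp
    have h1 : 0 < G.dist b a := hG.pos_dist_of_ne (Ne.symm hab)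
    omega
  have hmem : k ∈ {k | ∀ W : Finset V, W.card = k → IsResolvingSet G W} := by
    rw [← hres]
    exact Nat.sInf_mem ⟨_, hne⟩
  -- suppose the common neighborhood has ≥ k elements
  by_contra hlt
  push_neg at hlt
  set C : Set V := G.neighborSet u ∩ G.neighborSet v with hC
  have hCfin : C.Finite := Set.toFinite _
  have hk : k ≤ hCfin.toFinset.card := by
    rw [Set.ncard_eq_toFinset_card' C] at hlt
    rw [Set.Finite.card_toFinset] at *
    simp only [Set.toFinset_card] at hlt
    omega
  obtain ⟨W, hWsub, hWcard⟩ := Finset.exists_subset_card_eq hk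
  obtain ⟨w, hwW, hwd⟩ := hmem W hWcard u v huv
  have hwC : w ∈ C := by
    have := hWsub hwW
    simpa using this
  obtain ⟨hwu, hwv⟩ := hwC
  have h1 : G.dist u w = 1 := dist_eq_one_iff_adj.mpr hwu
  have h2 : G.dist v w = 1 := dist_eq_one_iff_adj.mpr hwv
  omega
end

section
/- If G is a randomly k-dimensional graph of order n that is not a complete graph, then the maximum degree of G satisfies Δ(G) ≤ n - 2. -/
open SimpleGraph

/-!
A vertex of degree `n - 1` is universal. Suppose `G` is randomly `k`-dimensional, has a universal
vertex `v`, and has two non-adjacent vertices `u`, `w`. All distances are then at most `2`, and `v`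
separates only itself from the other vertices. Hence a `(k - 1)`-set `S` avoiding `v` separates any
two vertices other than `v`, while it cannot resolve `G`, so some vertex `c ≠ v` has the same
distances to `S` as `v`, i.e. `c` is adjacent to all of `S`; the same then holds for smaller sets
avoiding `v`. Let `C` be the set of common neighbours of `u` and `w` other than `v`. The first fact
gives `|C| ≤ k - 2`, the second, applied to `C ∪ {u, w}`, gives `|C| ≥ k - 2`. Applied to `C ∪ {u}`
the second fact yields a vertex `b ∉ C` adjacent to `u` and to `C`, hence not to `w`; but then no
vertex of the `(k - 1)`-set `C ∪ {w}` separates `b` from `u`.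
-/

open Finset

section

variable {V : Type*} {G : SimpleGraph V}

theorem IsResolvingSet.mono_s13 {W W' : Finset V} (hW : IsResolvingSet G W) (hWW' : W ⊆ W') :
    IsResolvingSet G W' := fun a b hab =>
  let ⟨w, hw, hne⟩ := hW a b hab
  ⟨w, hWW' hw, hne⟩

theorem isResolvingSet_univ [Fintype V] (hG : G.Connected) : IsResolvingSet G univ :=
  fun a b hab => ⟨a, mem_univ a, by rw [dist_self]; exact (hG.pos_dist_of_ne hab.symm).ne⟩

theorem IsResolvingSet.metricDim_le [Fintype V] {W : Finset V} (hW : IsResolvingSet G W) :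
    metricDim G ≤ W.card :=
  Nat.sInf_le ⟨W, rfl, hW⟩

theorem metricDim_le_card_of_connected [Fintype V] (hG : G.Connected) :
    metricDim G ≤ Fintype.card V :=
  (isResolvingSet_univ hG).metricDim_le

theorem dist_eq_two_of_adj_of_adj {x y z : V} (hxz : G.Adj x z) (hzy : G.Adj z y) (hxy : x ≠ y)
    (hnadj : ¬G.Adj x y) : G.dist x y = 2 := by
  rw [SimpleGraph.dist, edist_eq_two_iff.mpr ⟨hxy, hnadj, z, hxz, hzy.symm⟩]
  rfl

theorem maxDegree_le_card_sub_two [Fintype V] [DecidableRel G.Adj]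
    (hG : ∀ v, ¬G.IsUniversal v) : G.maxDegree ≤ Fintype.card V - 2 :=
  maxDegree_le_of_forall_degree_le G _ fun v => by
    have := (G.degree_lt_card_sub_one v).mpr (hG v)
    omega

namespace RandomlyDimensional

variable [Fintype V] {k : ℕ} {v : V}

theorem isResolvingSet_of_le_card (h : RandomlyDimensional G k) {W : Finset V} (hW : k ≤ W.card) :
    IsResolvingSet G W :=
  let ⟨W₀, hW₀W, hW₀⟩ := exists_subset_card_eq hW
  (h.2 W₀ hW₀).1.mono_s13 hW₀W

theorem not_isResolvingSet_of_card_lt (h : RandomlyDimensional G k) {W : Finset V}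
    (hW : W.card < k) : ¬IsResolvingSet G W :=
  fun hres => (h.1 ▸ hres.metricDim_le).not_gt hW

theorem exists_dist_ne_of_pred_le_card (h : RandomlyDimensional G k) (hv : G.IsUniversal v)
    {S : Finset V} (hS : k - 1 ≤ S.card) (hvS : v ∉ S) {a b : V} (hab : a ≠ b) (hav : a ≠ v)
    (hbv : b ≠ v) : ∃ s ∈ S, G.dist a s ≠ G.dist b s := by
  classical
  obtain ⟨s, hs, hne⟩ :=
    h.isResolvingSet_of_le_card (W := insert v S) (by rw [card_insert_of_notMem hvS]; omega) a b hab
  rcases mem_insert.mp hs with rfl | hs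
  · exact absurd (by rw [dist_eq_one_iff_adj.mpr (hv hav.symm).symm,
      dist_eq_one_iff_adj.mpr (hv hbv.symm).symm]) hne
  · exact ⟨s, hs, hne⟩

theorem exists_forall_adj_of_card_lt (h : RandomlyDimensional G k) (hv : G.IsUniversal v)
    {S : Finset V} (hS : S.card < k) (hvS : v ∉ S) : ∃ c, c ≠ v ∧ ∀ s ∈ S, G.Adj c s := by
  classical
  have hk : k ≤ Fintype.card V := h.1 ▸ metricDim_le_card_of_connected (.of_isUniversal hv)
  obtain ⟨S', hSS', hS'v, hS'⟩ := exists_subsuperset_card_eq (n := k - 1)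
    (subset_erase.mpr ⟨subset_univ S, hvS⟩) (by omega)
    (by rw [card_erase_of_mem (mem_univ v), card_univ]; omega)
  have hvS' : v ∉ S' := fun hvS' => by simpa using hS'v hvS'
  have hnres := h.not_isResolvingSet_of_card_lt (W := S') (by omega)
  simp only [IsResolvingSet, not_forall, not_exists, not_and, not_not] at hnres
  obtain ⟨a, b, hab, hall⟩ := hnres
  obtain ⟨c, hcv, hc⟩ : ∃ c, c ≠ v ∧ ∀ s ∈ S', G.dist c s = G.dist v s := by
    by_cases hav : a = v
    · exact ⟨b, hav ▸ hab.symm, fun s hs => hav ▸ (hall s hs).symm⟩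
    by_cases hbv : b = v
    · exact ⟨a, hbv ▸ hab, hbv ▸ hall⟩
    obtain ⟨s, hs, hne⟩ := h.exists_dist_ne_of_pred_le_card hv hS'.ge hvS' hab hav hbv
    exact absurd (hall s hs) hne
  refine ⟨c, hcv, fun s hs => ?_⟩
  rw [← dist_eq_one_iff_adj, hc s (hSS' hs), dist_eq_one_iff_adj]
  exact hv fun hvs => hvS (hvs ▸ hs)

theorem card_add_one_lt_of_forall_adj (h : RandomlyDimensional G k) (hv : G.IsUniversal v)
    {u w : V} (huw : u ≠ w) (huv : u ≠ v) (hwv : w ≠ v) {C : Finset V} (hvC : v ∉ C)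
    (hC : ∀ c ∈ C, G.Adj c u ∧ G.Adj c w) : C.card + 1 < k := by
  by_contra! hle
  obtain ⟨c, hc, hne⟩ := h.exists_dist_ne_of_pred_le_card hv (by omega) hvC huw huv hwv
  exact hne (by
    rw [dist_eq_one_iff_adj.mpr (hC c hc).1.symm, dist_eq_one_iff_adj.mpr (hC c hc).2.symm])

theorem eq_top_of_isUniversal (h : RandomlyDimensional G k) (hv : G.IsUniversal v) : G = ⊤ := by
  classical
  by_contra hne
  obtain ⟨u, w, huw, hnadj⟩ := ne_top_iff_exists_not_adj.mp hne
  have huv : u ≠ v := by rintro rfl; exact hnadj (hv huw)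
  have hwv : w ≠ v := by rintro rfl; exact hnadj (hv huw.symm).symm
  set C := univ.filter fun c => c ≠ v ∧ G.Adj c u ∧ G.Adj c w
  have hvC : v ∉ C := by simp [C]
  have hwC : w ∉ C := by simp [C]
  have hC_lt : C.card + 1 < k :=
    h.card_add_one_lt_of_forall_adj hv huw huv hwv hvC fun _ hc => (mem_filter.mp hc).2.2
  have hC_ge : k ≤ C.card + 2 := by
    by_contra! hlt
    obtain ⟨c, hcv, hc⟩ := h.exists_forall_adj_of_card_lt hv (S := insert u (insert w C))
      (by grw [card_insert_le, card_insert_le]; omega) (by simp [huv.symm, hwv.symm, hvC])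
    have hcC : c ∈ C := by simp [C, hcv, hc u (by simp), hc w (by simp)]
    exact (hc c (by simp [hcC])).ne rfl
  obtain ⟨b, hbv, hb⟩ := h.exists_forall_adj_of_card_lt hv (S := insert u C)
    (by grw [card_insert_le]; omega) (by simp [huv.symm, hvC])
  have hbu : G.Adj b u := hb u (mem_insert_self u C)
  have hbw : ¬G.Adj b w := fun hbw =>
    (hb b (mem_insert_of_mem (by simp [C, hbv, hbu, hbw]))).ne rfl
  obtain ⟨t, ht, hne⟩ := h.exists_dist_ne_of_pred_le_card hv (S := insert w C)
    (by rw [card_insert_of_notMem hwC]; omega) (by simp [hwv.symm, hvC]) hbu.ne hbv huv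
  rcases mem_insert.mp ht with rfl | htC
  · have hbt : b ≠ t := by rintro rfl; exact hnadj hbu.symm
    exact hne (by rw [dist_eq_two_of_adj_of_adj (hv hbv.symm).symm (hv hwv.symm) hbt hbw,
      dist_eq_two_of_adj_of_adj (hv huv.symm).symm (hv hwv.symm) huw hnadj])
  · have htu : G.Adj t u := (mem_filter.mp htC).2.2.1
    exact hne (by rw [dist_eq_one_iff_adj.mpr (hb t (mem_insert_of_mem htC)),
      dist_eq_one_iff_adj.mpr htu.symm])

end RandomlyDimensional

end

theorem randomlyDimensional_maxDegree_le_general {V : Type*} [Fintype V] (G : SimpleGraph V)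
    [DecidableRel G.Adj] (k : ℕ) (h : RandomlyDimensional G k)
    (hne : G ≠ ⊤) : G.maxDegree ≤ Fintype.card V - 2 :=
  maxDegree_le_card_sub_two fun _ hv => hne (h.eq_top_of_isUniversal hv)

theorem randomlyDimensional_maxDegree_le {V : Type*} [Fintype V] (G : SimpleGraph V)
    [DecidableRel G.Adj] (hG : G.Connected) (k : ℕ) (h : RandomlyDimensional G k)
    (hne : G ≠ ⊤) : G.maxDegree ≤ Fintype.card V - 2 :=
  randomlyDimensional_maxDegree_le_general G k h hne
end
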